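/- arXiv:2304.10971 — 6 statements merged into one kernel-verified Lean document; each statement's English description precedes it below -/
import Mathlib

section
/- For every subset S ⊂ {1,…,d} and every finite positive vector y_{S^c} = (y_j)_{j∈S^c}, there exists a unique u_S(y_{S^c}) ∈ V_S solving the stiff limit problem Σ_{j∈S^c} y_j ∫_{Ω_j} ∇u_S(y_{S^c})·∇v dx = ⟨f,v⟩ for all v ∈ V_S. Moreover, for any sequence of parameter vectors y^n ∈ (0,∞)^d with (y^n)_{S^c} = y_{S^c} fixed and y^n_j → ∞ for every j ∈ S, the solutions u(y^n) converge strongly in H^1_0(Ω) to u_S(y_{S^c}). -/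
open scoped BigOperators ENNReal InnerProductSpace
open Filter

noncomputable section

variable {V : Type*} [NormedAddCommGroup V] [InnerProductSpace ℝ V] [CompleteSpace V]

/-- The closed subspace `V_S` of functions whose gradient vanishes on `Ω_j` for all `j ∈ S`,
encoded through the local Dirichlet forms `B j v w = ∫_{Ω_j} ∇v·∇w`. -/
def VS {d : ℕ} (B : Fin d → V →L[ℝ] V →L[ℝ] ℝ) (S : Set (Fin d)) : Submodule ℝ V where
  carrier := {v | ∀ j ∈ S, B j v = 0}
  add_mem' := by
    intro a b ha hb j hj
    simp only [Set.mem_setOf_eq] at *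
    simp [map_add, ha j hj, hb j hj]
  zero_mem' := by intro j hj; simp
  smul_mem' := by
    intro c a ha j hj
    simp only [Set.mem_setOf_eq] at *
    simp [map_smul, ha j hj]

/-- The parametric energy bilinear form `a_y(v,w) = Σ_j y_j ∫_{Ω_j} ∇v·∇w`. -/
def aForm {d : ℕ} (B : Fin d → V →L[ℝ] V →L[ℝ] ℝ) (y : Fin d → ℝ) (v w : V) : ℝ :=
  ∑ j, y j * B j v w

/-- The parametric energy norm `‖v‖_y`. -/
def eNorm {d : ℕ} (B : Fin d → V →L[ℝ] V →L[ℝ] ℝ) (y : Fin d → ℝ) (v : V) : ℝ :=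
  Real.sqrt (aForm B y v v)

/-- `u` is the weak solution of the diffusion problem with (finite) parameter `y`. -/
def IsWeakSol {d : ℕ} (B : Fin d → V →L[ℝ] V →L[ℝ] ℝ) (f : V →L[ℝ] ℝ)
    (y : Fin d → ℝ) (u : V) : Prop :=
  ∀ v : V, aForm B y u v = f v

/-- `u` is the (possibly stiff-limit) solution for an extended parameter `y ∈ (0,∞]^d`:
on the set `S = {j | y j = ∞}` of infinite entries, `u ∈ V_S` and `u` solves the
limit variational problem over `V_S`. -/
def IsSolE {d : ℕ} (B : Fin d → V →L[ℝ] V →L[ℝ] ℝ) (f : V →L[ℝ] ℝ)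
    (y : Fin d → ℝ≥0∞) (u : V) : Prop :=
  u ∈ VS B {j | y j = ∞} ∧
  ∀ v ∈ VS B {j | y j = ∞}, ∑ j, (y j).toReal * B j u v = f v

/-- `p` is the `H^1_0`-orthogonal projection of `u` onto `K`. -/
def IsOrthProj (K : Submodule ℝ V) (u p : V) : Prop :=
  p ∈ K ∧ ∀ w ∈ K, ⟪u - p, w⟫_ℝ = 0

/-- `p` is the Galerkin projection of `u` onto `K` for the energy inner product `⟨·,·⟩_y`. -/
def IsGalProj {d : ℕ} (B : Fin d → V →L[ℝ] V →L[ℝ] ℝ) (y : Fin d → ℝ)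
    (K : Submodule ℝ V) (u p : V) : Prop :=
  p ∈ K ∧ ∀ w ∈ K, aForm B y (u - p) w = 0

/-- Galerkin projection for an extended parameter `y ∈ (0,∞]^d` (the energy inner
product being restricted to the finite components of `y`). -/
def IsGalProjE {d : ℕ} (B : Fin d → V →L[ℝ] V →L[ℝ] ℝ) (y : Fin d → ℝ≥0∞)
    (K : Submodule ℝ V) (u p : V) : Prop :=
  p ∈ K ∧ ∀ w ∈ K, ∑ j, (y j).toReal * B j (u - p) w = 0

/-- The finite set of multi-indices `ν ∈ ℕ^d` of total degree `|ν| ≤ k`. -/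
def mIdx (d k : ℕ) : Finset (Fin d → ℕ) :=
  (Fintype.piFinset fun _ : Fin d => Finset.range (k+1)).filter fun ν => ∑ j, ν j ≤ k

/-- The monomial `y^ν`. -/
def mono {d : ℕ} (y : Fin d → ℝ) (ν : Fin d → ℕ) : ℝ := ∏ j, y j ^ ν j

/-!
The terms with `j ∈ S` vanish on `V_S`, so `a_y` is coercive on `V_S` and Lax–Milgram gives
`u_S`. For the limit, the error `e_n = u(yⁿ) - u_S` has energy `a_{yⁿ}(e_n, e_n) = r(e_n)`, where
`r = f - a_y(u_S, ·)` annihilates `V_S`. This bounds `e_n` uniformly and forces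
`B_j(e_n, e_n) = O(1 / yⁿ_j) → 0` for `j ∈ S`, hence `B_j(h, e_n) → 0` for every `h`.
The vectors `w` with `⟪w, e_n⟫ → 0` form a closed subspace (`e_n` is bounded) whose orthogonal
complement lies in `V_S`, so it contains the Riesz representative of `r`: the energy tends to `0`,
and so does `e_n` by coercivity.
-/

open Topology

section InnerProductSpace

variable {E : Type*} [NormedAddCommGroup E] [InnerProductSpace ℝ E]

theorem existsUnique_mem_forall_apply_eq_of_coercive (K : Submodule ℝ E) [CompleteSpace K]
    (b : E →L[ℝ] E →L[ℝ] ℝ) {c : ℝ} (hc : 0 < c) (hb : ∀ v ∈ K, c * ‖v‖ ^ 2 ≤ b v v)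
    (f : E →L[ℝ] ℝ) : ∃! u, u ∈ K ∧ ∀ v ∈ K, b u v = f v := by
  have hbK : IsCoercive (b.bilinearComp K.subtypeL K.subtypeL) :=
    ⟨c, hc, fun v => by simpa [sq, mul_assoc] using hb v v.2⟩
  obtain ⟨u, hLu⟩ := hbK.continuousLinearEquivOfBilin.surjective
    ((InnerProductSpace.toDual ℝ K).symm (f.comp K.subtypeL))
  have hu : ∀ v ∈ K, b u v = f v := fun v hv => by
    have := hbK.continuousLinearEquivOfBilin_apply u ⟨v, hv⟩
    rw [hLu, InnerProductSpace.toDual_symm_apply] at this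
    exact this.symm
  refine ⟨u, ⟨u.2, hu⟩, ?_⟩
  rintro u' ⟨hu'K, hu'⟩
  have hdiff : u' - u ∈ K := K.sub_mem hu'K u.2
  have hzero : b (u' - u) (u' - u) = 0 := by
    rw [map_sub b u', sub_apply, hu' _ hdiff, hu _ hdiff, sub_self]
  have : c * ‖u' - u‖ ^ 2 ≤ 0 := hzero ▸ hb _ hdiff
  simpa [sub_eq_zero] using nonpos_of_mul_nonpos_right this hc

theorem sq_apply_le_mul_apply_self (b : E →L[ℝ] E →L[ℝ] ℝ) (hs : ∀ v w, b v w = b w v)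
    (hn : ∀ v, 0 ≤ b v v) (v w : E) : b v w ^ 2 ≤ b v v * b w w := by
  simpa [sq, ← hs w v] using
    LinearMap.BilinForm.apply_mul_apply_le_of_forall_zero_le b.toLinearMap₁₂ hn v w

theorem apply_eq_zero_of_apply_self_eq_zero (b : E →L[ℝ] E →L[ℝ] ℝ)
    (hs : ∀ v w, b v w = b w v) (hn : ∀ v, 0 ≤ b v v) {v : E} (hv : b v v = 0) : b v = 0 := by
  ext w
  simpa [hv] using sq_apply_le_mul_apply_self b hs hn v w

theorem norm_le_div_of_mul_norm_sq_le_inner {g x : E} {c : ℝ} (hc : 0 < c)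
    (h : c * ‖x‖ ^ 2 ≤ ⟪g, x⟫_ℝ) : ‖x‖ ≤ ‖g‖ / c := by
  have h' : c * ‖x‖ ^ 2 ≤ ‖g‖ * ‖x‖ := h.trans (real_inner_le_norm g x)
  rcases (norm_nonneg x).eq_or_lt with hx | hx
  · rw [← hx]
    positivity
  · rw [le_div_iff₀ hc]
    nlinarith

theorem tendsto_nhds_zero_of_sq_le {α : Type*} {l : Filter α} {x g : α → ℝ}
    (hg : Tendsto g l (𝓝 0)) (hx : ∀ᶠ a in l, x a ^ 2 ≤ g a) : Tendsto x l (𝓝 0) := by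
  refine squeeze_zero_norm' (hx.mono fun a ha => Real.abs_le_sqrt ha) ?_
  simpa using hg.sqrt

variable {ι : Type*} (l : Filter ι)

def innerNullSubmodule (e : ι → E) : Submodule ℝ E where
  carrier := {w | Tendsto (fun i => ⟪w, e i⟫_ℝ) l (𝓝 0)}
  add_mem' {w w'} hw hw' := by simpa [inner_add_left] using hw.add hw'
  zero_mem' := by simpa using tendsto_const_nhds
  smul_mem' a w hw := by simpa [real_inner_smul_left] using hw.const_mul a

variable {l}

@[simp]
theorem mem_innerNullSubmodule {e : ι → E} {w : E} :
    w ∈ innerNullSubmodule l e ↔ Tendsto (fun i => ⟪w, e i⟫_ℝ) l (𝓝 0) :=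
  Iff.rfl

theorem isClosed_innerNullSubmodule {e : ι → E} {R : ℝ} (hR : ∀ᶠ i in l, ‖e i‖ ≤ R) :
    IsClosed (innerNullSubmodule l e : Set E) := by
  refine isClosed_of_closure_subset fun w hw => Metric.tendsto_nhds.2 fun ε hε => ?_
  obtain ⟨w', hw', hww'⟩ := Metric.mem_closure_iff.1 hw (ε / 2 / (|R| + 1)) (by positivity)
  filter_upwards [hR, Metric.tendsto_nhds.1 hw' (ε / 2) (half_pos hε)] with i hRi hw'i
  rw [Real.dist_0_eq_abs] at hw'i ⊢
  calc |⟪w, e i⟫_ℝ| ≤ |⟪w - w', e i⟫_ℝ| + |⟪w', e i⟫_ℝ| := by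
        simpa [inner_sub_left] using abs_sub_le ⟪w, e i⟫_ℝ ⟪w', e i⟫_ℝ 0
    _ ≤ dist w w' * (|R| + 1) + |⟪w', e i⟫_ℝ| := by
        gcongr
        rw [dist_eq_norm]
        exact (abs_real_inner_le_norm _ _).trans
          (mul_le_mul_of_nonneg_left (hRi.trans ((le_abs_self R).trans (by linarith)))
            (norm_nonneg _))
    _ < ε / 2 + ε / 2 := by
        gcongr
        exact (lt_div_iff₀ (by positivity)).1 hww'
    _ = ε := add_halves ε

end InnerProductSpace

theorem exists_pos_forall_notMem_le {ι : Type*} [Finite ι] {S : Set ι} {y : ι → ℝ}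
    (hy : ∀ j ∉ S, 0 < y j) : ∃ c, 0 < c ∧ ∀ j ∉ S, c ≤ y j := by
  have hle : ∀ᶠ c in 𝓝[>] (0 : ℝ), ∀ j ∉ S, c ≤ y j := eventually_all.2 fun j => by
    by_cases hj : j ∈ S
    · exact Eventually.of_forall fun _ h => absurd hj h
    · exact ((eventually_le_nhds (hy j hj)).filter_mono nhdsWithin_le_nhds).mono fun _ h _ => h
  exact (eventually_mem_nhdsWithin.and hle).exists

section VS

variable {E : Type*} [NormedAddCommGroup E] [InnerProductSpace ℝ E] {d : ℕ}
  {B : Fin d → E →L[ℝ] E →L[ℝ] ℝ}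

theorem isClosed_VS (S : Set (Fin d)) : IsClosed (VS B S : Set E) := by
  have : (VS B S : Set E) = ⋂ j ∈ S, B j ⁻¹' {0} := by
    ext v
    simp [VS]
  rw [this]
  exact isClosed_biInter fun j _ => isClosed_singleton.preimage (B j).continuous

theorem aForm_eq_sum_smul_apply (y : Fin d → ℝ) (u v : E) :
    aForm B y u v = (∑ j, y j • B j) u v := by
  simp [aForm]

theorem aForm_sub_left (y : Fin d → ℝ) (u u' v : E) :
    aForm B y (u - u') v = aForm B y u v - aForm B y u' v := by
  simp only [aForm_eq_sum_smul_apply, map_sub, sub_apply]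

theorem aForm_congr_of_mem_VS {S : Set (Fin d)} {y y' : Fin d → ℝ} (hy : ∀ j ∉ S, y j = y' j)
    {u : E} (hu : u ∈ VS B S) (v : E) : aForm B y u v = aForm B y' u v := by
  refine Finset.sum_congr rfl fun j _ => ?_
  by_cases hj : j ∈ S
  · simp [hu j hj]
  · rw [hy j hj]

theorem mul_norm_sq_le_aForm (hsum : ∀ v w : E, ∑ j, B j v w = ⟪v, w⟫_ℝ)
    (hnonneg : ∀ j v, 0 ≤ B j v v) {S : Set (Fin d)} {y : Fin d → ℝ} {c : ℝ}
    (hc : ∀ j ∉ S, c ≤ y j) {v : E} (hv : v ∈ VS B S) : c * ‖v‖ ^ 2 ≤ aForm B y v v := by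
  rw [← real_inner_self_eq_norm_sq, ← hsum, Finset.mul_sum]
  refine Finset.sum_le_sum fun j _ => ?_
  by_cases hj : j ∈ S
  · simp [hv j hj]
  · exact mul_le_mul_of_nonneg_right (hc j hj) (hnonneg j v)

theorem mul_apply_self_le_aForm (hnonneg : ∀ j v, 0 ≤ B j v v) {y : Fin d → ℝ}
    (hy : ∀ j, 0 ≤ y j) (j : Fin d) (v : E) : y j * B j v v ≤ aForm B y v v :=
  Finset.single_le_sum (f := fun i => y i * B i v v)
    (fun i _ => mul_nonneg (hy i) (hnonneg i v)) (Finset.mem_univ j)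

variable {ι : Type*} {l : Filter ι}

theorem tendsto_apply_zero_of_aForm_le (hsymm : ∀ j (v w : E), B j v w = B j w v)
    (hnonneg : ∀ j v, 0 ≤ B j v v) {y : ι → Fin d → ℝ} {e : ι → E} {C : ℝ}
    (hy : ∀ i j, 0 ≤ y i j) (hC : ∀ᶠ i in l, aForm B (y i) (e i) (e i) ≤ C) {j : Fin d}
    (hj : Tendsto (fun i => y i j) l atTop) (h : E) :
    Tendsto (fun i => B j h (e i)) l (𝓝 0) := by
  have hself : Tendsto (fun i => B j (e i) (e i)) l (𝓝 0) := by
    refine squeeze_zero' (Eventually.of_forall fun i => hnonneg j (e i)) ?_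
      ((tendsto_const_nhds (x := C)).div_atTop hj)
    filter_upwards [hC, hj.eventually_gt_atTop 0] with i hCi hji
    rw [le_div_iff₀' hji]
    exact (mul_apply_self_le_aForm hnonneg (hy i) j (e i)).trans hCi
  exact tendsto_nhds_zero_of_sq_le (by simpa using hself.const_mul (B j h h))
    (Eventually.of_forall fun i => sq_apply_le_mul_apply_self (B j) (hsymm j) (hnonneg j) h (e i))

theorem orthogonal_VS_le_innerNullSubmodule [CompleteSpace E]
    (hsymm : ∀ j (v w : E), B j v w = B j w v) (hnonneg : ∀ j v, 0 ≤ B j v v)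
    {S : Set (Fin d)} {e : ι → E} {R : ℝ} (hR : ∀ᶠ i in l, ‖e i‖ ≤ R)
    (he : ∀ j ∈ S, ∀ h, Tendsto (fun i => B j h (e i)) l (𝓝 0)) :
    (VS B S)ᗮ ≤ innerNullSubmodule l e := by
  have hle : (innerNullSubmodule l e)ᗮ ≤ VS B S := fun v hv j hj =>
    apply_eq_zero_of_apply_self_eq_zero (B j) (hsymm j) (hnonneg j) <| by
      have := hv ((InnerProductSpace.toDual ℝ E).symm (B j v))
        (by simpa [InnerProductSpace.toDual_symm_apply] using he j hj v)
      rwa [InnerProductSpace.toDual_symm_apply] at this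
  calc (VS B S)ᗮ ≤ (innerNullSubmodule l e)ᗮᗮ := Submodule.orthogonal_le hle
    _ = innerNullSubmodule l e := by
      rw [Submodule.orthogonal_orthogonal_eq_closure,
        (isClosed_innerNullSubmodule hR).submodule_topologicalClosure_eq]

theorem tendsto_of_isWeakSol [CompleteSpace E] (hsymm : ∀ j (v w : E), B j v w = B j w v)
    (hnonneg : ∀ j v, 0 ≤ B j v v) (hsum : ∀ v w : E, ∑ j, B j v w = ⟪v, w⟫_ℝ)
    {f : E →L[ℝ] ℝ} {S : Set (Fin d)} {y : Fin d → ℝ} {c : ℝ} (hc : 0 < c)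
    (hcy : ∀ j ∉ S, c ≤ y j) {uS : E} (huS : uS ∈ VS B S)
    (hsol : ∀ v ∈ VS B S, aForm B y uS v = f v) {yseq : ℕ → Fin d → ℝ} {u : ℕ → E}
    (hpos : ∀ n j, 0 < yseq n j) (hfix : ∀ n, ∀ j ∉ S, yseq n j = y j)
    (hto : ∀ j ∈ S, Tendsto (fun n => yseq n j) atTop atTop)
    (hu : ∀ n, IsWeakSol B f (yseq n) (u n)) : Tendsto u atTop (𝓝 uS) := by
  set g := (InnerProductSpace.toDual ℝ E).symm (f - (∑ j, y j • B j) uS)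
  have hg : g ∈ (VS B S)ᗮ := fun v hv => by
    rw [real_inner_comm, InnerProductSpace.toDual_symm_apply, sub_apply,
      ← aForm_eq_sum_smul_apply, hsol v hv, sub_self]
  have henergy : ∀ n, aForm B (yseq n) (u n - uS) (u n - uS) = ⟪g, u n - uS⟫_ℝ := fun n => by
    rw [InnerProductSpace.toDual_symm_apply, sub_apply, ← aForm_eq_sum_smul_apply,
      aForm_sub_left, hu n, aForm_congr_of_mem_VS (hfix n) huS]
  have hcoer : ∀ᶠ n in atTop, c * ‖u n - uS‖ ^ 2 ≤ ⟪g, u n - uS⟫_ℝ := by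
    have hge : ∀ᶠ n in atTop, ∀ j, c ≤ yseq n j := eventually_all.2 fun j => by
      by_cases hj : j ∈ S
      · exact (hto j hj).eventually_ge_atTop c
      · exact Eventually.of_forall fun n => hfix n j hj ▸ hcy j hj
    filter_upwards [hge] with n hn
    exact henergy n ▸ mul_norm_sq_le_aForm hsum hnonneg (S := ∅) (fun j _ => hn j)
      fun j hj => absurd hj (Set.notMem_empty j)
  have hbound : ∀ᶠ n in atTop, ‖u n - uS‖ ≤ ‖g‖ / c :=
    hcoer.mono fun n hn => norm_le_div_of_mul_norm_sq_le_inner hc hn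
  have henergy_le : ∀ᶠ n in atTop, aForm B (yseq n) (u n - uS) (u n - uS) ≤ ‖g‖ * (‖g‖ / c) :=
    hbound.mono fun n hn => henergy n ▸ (real_inner_le_norm _ _).trans
      (mul_le_mul_of_nonneg_left hn (norm_nonneg g))
  have hg0 : Tendsto (fun n => ⟪g, u n - uS⟫_ℝ) atTop (𝓝 0) :=
    orthogonal_VS_le_innerNullSubmodule hsymm hnonneg hbound (fun j hj =>
      tendsto_apply_zero_of_aForm_le hsymm hnonneg (fun n j => (hpos n j).le) henergy_le
        (hto j hj)) hg
  rw [tendsto_iff_norm_sub_tendsto_zero]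
  refine tendsto_nhds_zero_of_sq_le (by simpa using hg0.div_const c) ?_
  exact hcoer.mono fun n hn => (le_div_iff₀' hc).2 hn

end VS

/-- Lemma 2.1: existence and uniqueness of the stiff limit solution
`u_S(y_{S^c})`, and strong convergence of `u(y)` to it as `y_j → ∞` for `j ∈ S`. -/
theorem statement0
    {V : Type*} [NormedAddCommGroup V] [InnerProductSpace ℝ V] [CompleteSpace V]
    {d : ℕ}
    (B : Fin d → V →L[ℝ] V →L[ℝ] ℝ)
    (hsymm : ∀ (j : Fin d) (v w : V), B j v w = B j w v)
    (hnonneg : ∀ (j : Fin d) (v : V), 0 ≤ B j v v)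
    (hsum : ∀ v w : V, ∑ j, B j v w = ⟪v, w⟫_ℝ)
    (f : V →L[ℝ] ℝ)
    (S : Set (Fin d)) (y : Fin d → ℝ) (hy : ∀ j ∉ S, 0 < y j) :
    (∃! uS : V, uS ∈ VS B S ∧ ∀ v ∈ VS B S, aForm B y uS v = f v) ∧
    (∀ uS : V, (uS ∈ VS B S ∧ ∀ v ∈ VS B S, aForm B y uS v = f v) →
      ∀ (yseq : ℕ → Fin d → ℝ) (useq : ℕ → V),
        (∀ n j, 0 < yseq n j) →
        (∀ n, ∀ j ∉ S, yseq n j = y j) →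
        (∀ j ∈ S, Tendsto (fun n => yseq n j) atTop atTop) →
        (∀ n, IsWeakSol B f (yseq n) (useq n)) →
        Tendsto useq atTop (nhds uS)) := by
  obtain ⟨c, hc, hcy⟩ := exists_pos_forall_notMem_le hy
  have : CompleteSpace (VS B S) := (isClosed_VS S).completeSpace_coe
  refine ⟨?_, fun uS ⟨huS, hsol⟩ yseq useq hpos hfix hto hu =>
    tendsto_of_isWeakSol hsymm hnonneg hsum hc hcy huS hsol hpos hfix hto hu⟩
  simp only [aForm_eq_sum_smul_apply]
  refine existsUnique_mem_forall_apply_eq_of_coercive _ _ hc (fun v hv => ?_) f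
  exact aForm_eq_sum_smul_apply (B := B) y v v ▸ mul_norm_sq_le_aForm hsum hnonneg hcy hv
end
end

section
/- The extended solution set 𝓑̄ := {u(y) : y ∈ [1,∞]^d} is a compact subset of H^1_0(Ω), where when y_j = ∞ exactly for j in a set S, u(y) is defined as the stiff limit solution u_S(y_{S^c}). -/
/-!
Along a subsequence the parameters converge in `[1,∞]^d`, the set `S` of infinite entries is
constant, and the finite entries that blow up do so monotonically. All the solutions then lie in
the same space `V_S`, and testing the two equations against each other gives
`‖u_n - u_m‖² ≤ f(u_n) - f(u_m) + ‖f‖² ∑_j (y_{n,j} - y_{m,j})⁺`, whose last term is eventually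
small for `n ≤ m`. Since `f(u_n) ≥ ‖u_n‖² ≥ 0` is bounded below, the solutions form a Cauchy
sequence. Its limit lies in `V_T` for `T = {j | ȳ_j = ∞}` because `y_{n,j} ∫_{Ω_j} |∇u_n|² ≤ ‖f‖²`,
and passing to the limit in the equations shows that it is `u(ȳ)`.
-/

open scoped BigOperators ENNReal InnerProductSpace
open Filter

noncomputable section

variable {V : Type*} [NormedAddCommGroup V] [InnerProductSpace ℝ V] [CompleteSpace V]

open Set
open scoped Topology

theorem exists_subseq_eq_const {α : Type*} [Finite α] (x : ℕ → α) :
    ∃ (a : α) (φ : ℕ → ℕ), StrictMono φ ∧ ∀ n, x (φ n) = a := by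
  obtain ⟨a, ha⟩ := Finite.exists_infinite_fiber x
  obtain ⟨φ, hφ, hφa⟩ := extraction_of_frequently_atTop
    (Nat.frequently_atTop_iff_infinite.2 (Set.infinite_coe_iff.1 ha))
  exact ⟨a, φ, hφ, hφa⟩

theorem exists_subseq_forall_monotone {ι : Type*} (s : Finset ι) (g : ℕ → ι → ℝ)
    (h : ∀ j ∈ s, Tendsto (fun n => g n j) atTop atTop) :
    ∃ φ : ℕ → ℕ, StrictMono φ ∧ ∀ j ∈ s, Monotone fun n => g (φ n) j := by
  classical
  induction s using Finset.induction_on generalizing g with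
  | empty => exact ⟨id, strictMono_id, by simp⟩
  | insert i s _ ih =>
    obtain ⟨φ, hφ, hφi⟩ :=
      strictMono_subseq_of_tendsto_atTop (h i (Finset.mem_insert_self i s))
    obtain ⟨ψ, hψ, hψs⟩ := ih (fun n => g (φ n))
      fun j hj => (h j (Finset.mem_insert_of_mem hj)).comp hφ.tendsto_atTop
    refine ⟨φ ∘ ψ, hφ.comp hψ, fun j hj => ?_⟩
    rcases Finset.mem_insert.1 hj with rfl | hj
    · exact hφi.monotone.comp hψ.monotone
    · exact hψs j hj

theorem ENNReal.tendsto_toReal_atTop {α : Type*} {l : Filter α} {a : α → ℝ≥0∞}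
    (ha : Tendsto a l (𝓝 ∞)) (hfin : ∀ᶠ x in l, a x ≠ ∞) :
    Tendsto (fun x => (a x).toReal) l atTop := by
  refine tendsto_atTop.2 fun r => ?_
  filter_upwards [ha.eventually (lt_mem_nhds ENNReal.ofReal_lt_top), hfin] with x hx hxfin
  exact (ENNReal.ofReal_le_iff_le_toReal hxfin).1 hx.le

theorem exists_subseq_tendsto_topSet_const {ι : Type*} [Fintype ι] (y : ℕ → ι → ℝ≥0∞) :
    ∃ (ybar : ι → ℝ≥0∞) (S : Set ι) (ψ : ℕ → ℕ), StrictMono ψ ∧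
      Tendsto (y ∘ ψ) atTop (𝓝 ybar) ∧ (∀ n, {j | y (ψ n) j = ∞} = S) ∧
      ∀ j, ybar j = ∞ → Monotone fun n => (y (ψ n) j).toReal := by
  classical
  obtain ⟨ybar, φ₁, hφ₁, hy⟩ := CompactSpace.tendsto_subseq y
  obtain ⟨S, φ₂, hφ₂, hS⟩ := exists_subseq_eq_const fun n => {j | y (φ₁ n) j = ∞}
  have hblowup : ∀ j ∈ Finset.univ.filter (fun j => ybar j = ∞ ∧ j ∉ S),
      Tendsto (fun n => (y (φ₁ (φ₂ n)) j).toReal) atTop atTop := by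
    intro j hj
    obtain ⟨htop, hjS⟩ := (Finset.mem_filter.1 hj).2
    refine ENNReal.tendsto_toReal_atTop ?_ (Eventually.of_forall fun n h => hjS (hS n ▸ h))
    exact htop ▸ tendsto_pi_nhds.1 (hy.comp hφ₂.tendsto_atTop) j
  obtain ⟨φ₃, hφ₃, hmono⟩ := exists_subseq_forall_monotone _ _ hblowup
  refine ⟨ybar, S, φ₁ ∘ φ₂ ∘ φ₃, hφ₁.comp (hφ₂.comp hφ₃),
    hy.comp (hφ₂.comp hφ₃).tendsto_atTop, fun n => hS (φ₃ n), fun j hj => ?_⟩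
  by_cases hjS : j ∈ S
  · have htop : ∀ n, y (φ₁ (φ₂ (φ₃ n))) j = ∞ :=
      fun n => (Set.ext_iff.1 (hS (φ₃ n)) j).2 hjS
    simp only [Function.comp_apply, htop, ENNReal.toReal_top]
    exact monotone_const
  · exact hmono j (by simp [hj, hjS])

def IsAlmostMonotone (a : ℕ → ℝ) : Prop :=
  ∀ ε > 0, ∀ᶠ n in atTop, ∀ m, n ≤ m → a n ≤ a m + ε

theorem Monotone.isAlmostMonotone {a : ℕ → ℝ} (h : Monotone a) : IsAlmostMonotone a :=
  fun _ hε => Eventually.of_forall fun _ _ hnm => (h hnm).trans (le_add_of_nonneg_right hε.le)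

theorem CauchySeq.isAlmostMonotone {a : ℕ → ℝ} (h : CauchySeq a) : IsAlmostMonotone a := by
  intro ε hε
  obtain ⟨N, hN⟩ := Metric.cauchySeq_iff.1 h ε hε
  filter_upwards [eventually_ge_atTop N] with n hn m hnm
  have hdist := hN n hn m (hn.trans hnm)
  rw [Real.dist_eq] at hdist
  linarith [le_abs_self (a n - a m)]

theorem IsAlmostMonotone.eventually_sum_posPart_sub_le {ι : Type*} [Fintype ι] {z : ℕ → ι → ℝ}
    (h : ∀ j, IsAlmostMonotone fun n => z n j) {ε : ℝ} (hε : 0 < ε) :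
    ∀ᶠ n in atTop, ∀ m, n ≤ m → ∑ j, (z n j - z m j)⁺ ≤ ε := by
  have hη : 0 < ε / (Fintype.card ι + 1) := by positivity
  filter_upwards [eventually_all.2 fun j => h j _ hη] with n hn m hnm
  calc ∑ j, (z n j - z m j)⁺ ≤ Fintype.card ι • (ε / (Fintype.card ι + 1)) :=
        Finset.sum_le_card_nsmul _ _ _ fun j _ => sup_le (by linarith [hn j m hnm]) hη.le
    _ ≤ ε := by
      rw [nsmul_eq_mul, ← mul_div_assoc, div_le_iff₀ (by positivity)]
      nlinarith

theorem cauchySeq_of_sq_dist_le {α : Type*} [PseudoMetricSpace α] {x : ℕ → α} {a : ℕ → ℝ}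
    (ha : BddBelow (range a))
    (h : ∀ ε > 0, ∀ᶠ n in atTop, ∀ m, n ≤ m → dist (x n) (x m) ^ 2 ≤ a n - a m + ε) :
    CauchySeq x := by
  refine Metric.cauchySeq_iff'.2 fun ε hε => ?_
  obtain ⟨N, hN⟩ := eventually_atTop.1 (h (ε ^ 2 / 2) (by positivity))
  have hbdd : BddBelow (a '' Ici N) := ha.mono (image_subset_range _ _)
  obtain ⟨_, ⟨n, hn, rfl⟩, hnlt⟩ := exists_lt_of_csInf_lt ((nonempty_Ici).image a)
    (lt_add_of_pos_right (sInf (a '' Ici N)) (by positivity : 0 < ε ^ 2 / 2))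
  refine ⟨n, fun m hm => ?_⟩
  have hinf : sInf (a '' Ici N) ≤ a m :=
    csInf_le hbdd ⟨m, mem_Ici.2 ((mem_Ici.1 hn).trans hm), rfl⟩
  have hsq := hN n hn m hm
  rw [dist_comm]
  exact lt_of_pow_lt_pow_left₀ 2 hε.le (by linarith)

theorem ContinuousLinearMap.apply_eq_zero_of_apply_self_eq_zero {M : Type*} [AddCommGroup M]
    [Module ℝ M] [TopologicalSpace M] {b : M →L[ℝ] M →L[ℝ] ℝ}
    (hsymm : ∀ v w, b v w = b w v) (hnonneg : ∀ v, 0 ≤ b v v) {v : M} (hv : b v v = 0) :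
    b v = 0 := by
  ext w
  have hquad : ∀ t : ℝ, 0 ≤ b w w * (t * t) + 2 * b v w * t + 0 := fun t => by
    have h := hnonneg (v + t • w)
    simp only [map_add, map_smul, add_apply, smul_apply, smul_eq_mul, hv, hsymm w v] at h
    linarith
  have hdisc := discrim_le_zero hquad
  rw [discrim] at hdisc
  simpa using (show b v w = 0 by nlinarith [sq_nonneg (b v w)])

section Energy

variable {E : Type*} [NormedAddCommGroup E] [InnerProductSpace ℝ E] {d : ℕ}

structure IsInnerDecomposition (B : Fin d → E →L[ℝ] E →L[ℝ] ℝ) : Prop where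
  symm : ∀ j v w, B j v w = B j w v
  nonneg : ∀ j v, 0 ≤ B j v v
  sum_eq_inner : ∀ v w, ∑ j, B j v w = ⟪v, w⟫_ℝ

-- `IsSolE B f y` unfolds to `IsSolOn B f {j | y j = ∞} (fun j => (y j).toReal)`.
def IsSolOn (B : Fin d → E →L[ℝ] E →L[ℝ] ℝ) (f : E →L[ℝ] ℝ) (S : Set (Fin d))
    (z : Fin d → ℝ) (u : E) : Prop :=
  u ∈ VS B S ∧ ∀ v ∈ VS B S, ∑ j, z j * B j u v = f v

variable {B : Fin d → E →L[ℝ] E →L[ℝ] ℝ} {f : E →L[ℝ] ℝ} {S T : Set (Fin d)}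

section

variable {z z' : Fin d → ℝ} {u u' v : E}

namespace IsInnerDecomposition

theorem apply_self_le_norm_sq (hB : IsInnerDecomposition B) (j : Fin d) (v : E) :
    B j v v ≤ ‖v‖ ^ 2 := by
  rw [← real_inner_self_eq_norm_sq, ← hB.sum_eq_inner]
  exact Finset.single_le_sum (fun i _ => hB.nonneg i v) (Finset.mem_univ j)

theorem apply_self_le_mul (hB : IsInnerDecomposition B) (hv : v ∈ VS B S)
    (hz : ∀ j ∉ S, 1 ≤ z j) (j : Fin d) : B j v v ≤ z j * B j v v := by
  by_cases hj : j ∈ S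
  · simp [hv j hj]
  · exact le_mul_of_one_le_left (hB.nonneg j v) (hz j hj)

theorem norm_sq_le_sum (hB : IsInnerDecomposition B) (hv : v ∈ VS B S)
    (hz : ∀ j ∉ S, 1 ≤ z j) : ‖v‖ ^ 2 ≤ ∑ j, z j * B j v v := by
  rw [← real_inner_self_eq_norm_sq, ← hB.sum_eq_inner]
  exact Finset.sum_le_sum fun j _ => hB.apply_self_le_mul hv hz j

end IsInnerDecomposition

namespace IsSolOn

theorem energy_eq (hu : IsSolOn B f S z u) : ∑ j, z j * B j u u = f u := hu.2 u hu.1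

theorem norm_sq_le_apply (hB : IsInnerDecomposition B) (hu : IsSolOn B f S z u)
    (hz : ∀ j ∉ S, 1 ≤ z j) : ‖u‖ ^ 2 ≤ f u :=
  hu.energy_eq ▸ hB.norm_sq_le_sum hu.1 hz

theorem norm_le (hB : IsInnerDecomposition B) (hu : IsSolOn B f S z u)
    (hz : ∀ j ∉ S, 1 ≤ z j) : ‖u‖ ≤ ‖f‖ := by
  have hfu : f u ≤ ‖f‖ * ‖u‖ := (Real.le_norm_self _).trans (f.le_opNorm u)
  nlinarith [hu.norm_sq_le_apply hB hz, norm_nonneg u, norm_nonneg f]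

theorem apply_le_norm_sq (hB : IsInnerDecomposition B) (hu : IsSolOn B f S z u)
    (hz : ∀ j ∉ S, 1 ≤ z j) : f u ≤ ‖f‖ ^ 2 := by
  have hfu : f u ≤ ‖f‖ * ‖u‖ := (Real.le_norm_self _).trans (f.le_opNorm u)
  nlinarith [hu.norm_le hB hz, norm_nonneg f]

theorem mul_apply_self_le (hB : IsInnerDecomposition B) (hu : IsSolOn B f S z u)
    (hz : ∀ j ∉ S, 1 ≤ z j) (j : Fin d) : z j * B j u u ≤ ‖f‖ ^ 2 := by
  refine le_trans ?_ (hu.energy_eq ▸ hu.apply_le_norm_sq hB hz)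
  exact Finset.single_le_sum
    (fun i _ => (hB.nonneg i u).trans (hB.apply_self_le_mul hu.1 hz i)) (Finset.mem_univ j)

theorem norm_sub_sq_le (hB : IsInnerDecomposition B) (hu : IsSolOn B f S z u)
    (hu' : IsSolOn B f S z' u') (hz : ∀ j ∉ S, 1 ≤ z j) (hz' : ∀ j ∉ S, 1 ≤ z' j) :
    ‖u - u'‖ ^ 2 ≤ f u - f u' + ‖f‖ ^ 2 * ∑ j, (z j - z' j)⁺ := by
  have hexpand :
      ∑ j, z j * B j (u - u') (u - u') = f u - 2 * f u' + ∑ j, z j * B j u' u' := by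
    rw [← hu.energy_eq, ← hu.2 u' hu'.1, Finset.mul_sum, ← Finset.sum_sub_distrib,
      ← Finset.sum_add_distrib]
    refine Finset.sum_congr rfl fun j _ => ?_
    simp only [map_sub, sub_apply, hB.symm j u' u]
    ring
  have hshift : ∑ j, z j * B j u' u' ≤ f u' + ‖f‖ ^ 2 * ∑ j, (z j - z' j)⁺ := by
    rw [← hu'.energy_eq, Finset.mul_sum, ← Finset.sum_add_distrib]
    refine Finset.sum_le_sum fun j _ => ?_
    have hBf : B j u' u' ≤ ‖f‖ ^ 2 := (hB.apply_self_le_norm_sq j u').trans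
      (pow_le_pow_left₀ (norm_nonneg _) (hu'.norm_le hB hz') 2)
    nlinarith [hB.nonneg j u', le_posPart (z j - z' j), posPart_nonneg (z j - z' j)]
  linarith [hB.norm_sq_le_sum (sub_mem hu.1 hu'.1) hz]

end IsSolOn

end

variable {w : ℕ → E} {z : ℕ → Fin d → ℝ} {ubar : E}

theorem cauchySeq_of_isSolOn (hB : IsInnerDecomposition B)
    (hw : ∀ n, IsSolOn B f S (z n) (w n)) (hz : ∀ n, ∀ j ∉ S, 1 ≤ z n j)
    (hmono : ∀ j, IsAlmostMonotone fun n => z n j) : CauchySeq w := by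
  refine cauchySeq_of_sq_dist_le (a := fun n => f (w n)) ⟨0, ?_⟩ fun ε hε => ?_
  · rintro _ ⟨n, rfl⟩
    exact (sq_nonneg _).trans ((hw n).norm_sq_le_apply hB (hz n))
  have hη : 0 < ε / (‖f‖ ^ 2 + 1) := by positivity
  filter_upwards [IsAlmostMonotone.eventually_sum_posPart_sub_le hmono hη] with n hn m hnm
  have hparam : ‖f‖ ^ 2 * ∑ j, (z n j - z m j)⁺ ≤ ε := by
    calc ‖f‖ ^ 2 * ∑ j, (z n j - z m j)⁺ ≤ (‖f‖ ^ 2 + 1) * (ε / (‖f‖ ^ 2 + 1)) := by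
          gcongr
          · linarith
          · exact hn m hnm
      _ = ε := by field_simp
  rw [dist_eq_norm]
  linarith [(hw n).norm_sub_sq_le hB (hw m) (hz n) (hz m)]

theorem mem_VS_of_tendsto (hB : IsInnerDecomposition B)
    (hw : ∀ n, IsSolOn B f S (z n) (w n)) (hz : ∀ n, ∀ j ∉ S, 1 ≤ z n j)
    (hlim : Tendsto w atTop (𝓝 ubar))
    (hblowup : ∀ j ∈ T, j ∉ S → Tendsto (fun n => z n j) atTop atTop) : ubar ∈ VS B T := by
  intro j hj
  refine (B j).apply_eq_zero_of_apply_self_eq_zero (hB.symm j) (hB.nonneg j) ?_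
  have hcont : Tendsto (fun n => B j (w n) (w n)) atTop (𝓝 (B j ubar ubar)) :=
    ((B j).continuous₂.tendsto _).comp (hlim.prodMk_nhds hlim)
  refine tendsto_nhds_unique hcont ?_
  by_cases hjS : j ∈ S
  · simp only [fun n => (hw n).1 j hjS, zero_apply]
    exact tendsto_const_nhds
  refine squeeze_zero (g := fun n => ‖f‖ ^ 2 / z n j) (fun n => hB.nonneg j _)
    (fun n => ?_) (tendsto_const_nhds.div_atTop (hblowup j hj hjS))
  rw [le_div_iff₀ (zero_lt_one.trans_le (hz n j hjS)), mul_comm]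
  exact (hw n).mul_apply_self_le hB (hz n) j

theorem isSolOn_of_tendsto (hB : IsInnerDecomposition B) {zbar : Fin d → ℝ}
    (hw : ∀ n, IsSolOn B f S (z n) (w n)) (hz : ∀ n, ∀ j ∉ S, 1 ≤ z n j) (hST : S ⊆ T)
    (hlim : Tendsto w atTop (𝓝 ubar))
    (hblowup : ∀ j ∈ T, j ∉ S → Tendsto (fun n => z n j) atTop atTop)
    (hconv : ∀ j ∉ T, Tendsto (fun n => z n j) atTop (𝓝 (zbar j))) :
    IsSolOn B f T zbar ubar := by
  refine ⟨mem_VS_of_tendsto hB hw hz hlim hblowup, fun v hv => ?_⟩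
  have hterm : ∀ j,
      Tendsto (fun n => z n j * B j (w n) v) atTop (𝓝 (zbar j * B j ubar v)) := by
    intro j
    by_cases hj : j ∈ T
    · have hzero : ∀ x, B j x v = 0 := fun x => by rw [hB.symm, hv j hj]; rfl
      simp only [hzero, mul_zero]
      exact tendsto_const_nhds
    · exact (hconv j hj).mul
        (((B j).continuous₂.tendsto _).comp (hlim.prodMk_nhds tendsto_const_nhds))
  refine tendsto_nhds_unique (tendsto_finsetSum _ fun j _ => hterm j) ?_
  simp only [fun n => (hw n).2 v fun j hj => hv j (hST hj)]
  exact tendsto_const_nhds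

end Energy

/-- Theorem 2.2: the extended solution set
`𝓑̄ = {u(y) : y ∈ [1,∞]^d}` is compact in `H^1_0(Ω)`. -/
theorem statement2
    {V : Type*} [NormedAddCommGroup V] [InnerProductSpace ℝ V] [CompleteSpace V]
    {d : ℕ}
    (B : Fin d → V →L[ℝ] V →L[ℝ] ℝ)
    (hsymm : ∀ (j : Fin d) (v w : V), B j v w = B j w v)
    (hnonneg : ∀ (j : Fin d) (v : V), 0 ≤ B j v v)
    (hsum : ∀ v w : V, ∑ j, B j v w = ⟪v, w⟫_ℝ)
    (f : V →L[ℝ] ℝ) :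
    IsCompact {u : V | ∃ y : Fin d → ℝ≥0∞, (∀ j, 1 ≤ y j) ∧ IsSolE B f y u} := by
  have hB : IsInnerDecomposition B := ⟨hsymm, hnonneg, hsum⟩
  refine IsSeqCompact.isCompact fun u hu => ?_
  choose y hy1 hsol using hu
  obtain ⟨ybar, S, ψ, hψ, hy, hS, hmono⟩ := exists_subseq_tendsto_topSet_const y
  have hyj : ∀ j, Tendsto (fun n => y (ψ n) j) atTop (𝓝 (ybar j)) := tendsto_pi_nhds.1 hy
  set z : ℕ → Fin d → ℝ := fun n j => (y (ψ n) j).toReal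
  have hsolS : ∀ n, IsSolOn B f S (z n) (u (ψ n)) := fun n => hS n ▸ hsol (ψ n)
  have hfin : ∀ n, ∀ j ∉ S, y (ψ n) j ≠ ∞ := fun n j hj h => hj (hS n ▸ h)
  have hz : ∀ n, ∀ j ∉ S, 1 ≤ z n j := fun n j hj => by
    simpa using ENNReal.toReal_mono (hfin n j hj) (hy1 (ψ n) j)
  have hconv : ∀ j ∉ {j | ybar j = ∞}, Tendsto (fun n => z n j) atTop (𝓝 (ybar j).toReal) :=
    fun j hj => (ENNReal.tendsto_toReal hj).comp (hyj j)
  have hzmono : ∀ j, IsAlmostMonotone fun n => z n j := fun j =>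
    if hj : ybar j = ∞ then (hmono j hj).isAlmostMonotone
    else (hconv j hj).cauchySeq.isAlmostMonotone
  obtain ⟨ubar, hubar⟩ :=
    cauchySeq_tendsto_of_complete (cauchySeq_of_isSolOn hB hsolS hz hzmono)
  have hST : S ⊆ {j | ybar j = ∞} := fun j hj => tendsto_nhds_unique (hyj j)
    (tendsto_const_nhds.congr fun n => ((Set.ext_iff.1 (hS n) j).2 hj).symm)
  have hblowup : ∀ j ∈ {j | ybar j = ∞}, j ∉ S → Tendsto (fun n => z n j) atTop atTop :=
    fun j hj hjS => ENNReal.tendsto_toReal_atTop (hj ▸ hyj j) (.of_forall fun n => hfin n j hjS)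
  exact ⟨ubar, ⟨ybar, fun j => ge_of_tendsto' (hyj j) fun n => hy1 (ψ n) j,
    isSolOn_of_tendsto hB hsolS hz hST hubar hblowup hconv⟩, ψ, hψ, hubar⟩

end
end

section
/- The normalized solution set 𝓝 := {u(y) : y ∈ [1,∞]^d, min_j y_j = 1} is compact in H^1_0(Ω), and every u(y) ∈ 𝓝 satisfies the framing min_{1≤j≤d} ‖f‖_{H^{-1}(Ω_j)} ≤ ‖u(y)‖_{H^1_0} ≤ C_f, where ‖f‖_{H^{-1}(Ω_j)} denotes the norm of f as a continuous linear functional on H^1_0(Ω_j). -/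
open scoped BigOperators ENNReal InnerProductSpace
open Filter

noncomputable section

variable {V : Type*} [NormedAddCommGroup V] [InnerProductSpace ℝ V] [CompleteSpace V]

/-!
Testing the equation with `u` itself and using `y ≥ 1` gives `‖u‖² ≤ f u ≤ C_f ‖u‖`; testing it
with `v` supported in `Ω_j`, where `y_j = 1`, gives `f v = ∫_{Ω_j} ∇u·∇v ≤ ‖u‖ ‖v‖`.

For compactness take an ultrafilter on the pairs `(y, u(y))`. The parameters converge in the compact
cube `[1,∞]^d`, and the solutions, bounded by `C_f`, converge weakly to some `w`. On a coordinate
with `y*_j = ∞` the energy bound `y_j ∫_{Ω_j} |∇u|² ≤ C_f²` forces `∇w = 0` on `Ω_j`, and passing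
to the limit in the equation shows `w = u(y*)`. The convergence is strong because
`‖u - w‖² ≤ a_y(u - w, u - w) = f u - 2 f w + a_y(w, w) → f w - 2 f w + f w = 0`.
-/

open scoped Topology

section

variable {E : Type*} [NormedAddCommGroup E] [InnerProductSpace ℝ E]
  {d : ℕ} {B : Fin d → E →L[ℝ] E →L[ℝ] ℝ} {f : E →L[ℝ] ℝ} {y : Fin d → ℝ≥0∞}

theorem VS_anti {S T : Set (Fin d)} (h : S ⊆ T) : VS B T ≤ VS B S :=
  fun _ hv j hj => hv j (h hj)

theorem ContinuousLinearMap.sq_apply_le_of_symm {A : E →L[ℝ] E →L[ℝ] ℝ}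
    (hsymm : ∀ v w, A v w = A w v) (hnonneg : ∀ v, 0 ≤ A v v) (v w : E) :
    A v w ^ 2 ≤ A v v * A w w :=
  LinearMap.BilinForm.apply_sq_le_of_symm A.toLinearMap₁₂ hnonneg
    (LinearMap.isSymm_def.mpr fun v w => hsymm v w) v w

theorem apply_self_le_norm_sq (hnonneg : ∀ (j : Fin d) (v : E), 0 ≤ B j v v)
    (hsum : ∀ v w : E, ∑ j, B j v w = ⟪v, w⟫_ℝ) (j : Fin d) (v : E) :
    B j v v ≤ ‖v‖ ^ 2 := by
  rw [← real_inner_self_eq_norm_sq, ← hsum]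
  exact Finset.single_le_sum (fun i _ => hnonneg i v) (Finset.mem_univ j)

theorem abs_apply_le_sqrt_mul_norm (hsymm : ∀ (j : Fin d) (v w : E), B j v w = B j w v)
    (hnonneg : ∀ (j : Fin d) (v : E), 0 ≤ B j v v)
    (hsum : ∀ v w : E, ∑ j, B j v w = ⟪v, w⟫_ℝ) (j : Fin d) (v w : E) :
    |B j v w| ≤ √(B j v v) * ‖w‖ := by
  have h : B j v w ^ 2 ≤ B j v v * ‖w‖ ^ 2 :=
    (ContinuousLinearMap.sq_apply_le_of_symm (hsymm j) (hnonneg j) v w).trans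
      (mul_le_mul_of_nonneg_left (apply_self_le_norm_sq hnonneg hsum j w) (hnonneg j v))
  calc |B j v w| ≤ √(B j v v * ‖w‖ ^ 2) := Real.abs_le_sqrt h
    _ = √(B j v v) * ‖w‖ := by rw [Real.sqrt_mul (hnonneg j v), Real.sqrt_sq (norm_nonneg w)]

theorem norm_sq_le_sum_toReal_mul (hnonneg : ∀ (j : Fin d) (v : E), 0 ≤ B j v v)
    (hsum : ∀ v w : E, ∑ j, B j v w = ⟪v, w⟫_ℝ) (hy : ∀ j, 1 ≤ y j) {x : E}
    (hx : x ∈ VS B {j | y j = ∞}) :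
    ‖x‖ ^ 2 ≤ ∑ j, (y j).toReal * B j x x := by
  rw [← real_inner_self_eq_norm_sq, ← hsum]
  refine Finset.sum_le_sum fun j _ => ?_
  by_cases h : y j = ∞
  · simp [hx j h]
  · exact le_mul_of_one_le_left (hnonneg j x) (by simpa using ENNReal.toReal_mono h (hy j))

namespace IsSolE

variable {u : E}

theorem norm_sq_le_apply (hnonneg : ∀ (j : Fin d) (v : E), 0 ≤ B j v v)
    (hsum : ∀ v w : E, ∑ j, B j v w = ⟪v, w⟫_ℝ) (hy : ∀ j, 1 ≤ y j) (hu : IsSolE B f y u) :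
    ‖u‖ ^ 2 ≤ f u :=
  (norm_sq_le_sum_toReal_mul hnonneg hsum hy hu.1).trans_eq (hu.2 u hu.1)

theorem norm_le (hnonneg : ∀ (j : Fin d) (v : E), 0 ≤ B j v v)
    (hsum : ∀ v w : E, ∑ j, B j v w = ⟪v, w⟫_ℝ) (hy : ∀ j, 1 ≤ y j) (hu : IsSolE B f y u) :
    ‖u‖ ≤ ‖f‖ := by
  have h : ‖u‖ * ‖u‖ ≤ ‖f‖ * ‖u‖ := by
    rw [← sq]
    exact (hu.norm_sq_le_apply hnonneg hsum hy).trans ((Real.le_norm_self _).trans (f.le_opNorm u))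
  rcases (norm_nonneg u).eq_or_lt with h0 | h0
  · exact h0 ▸ norm_nonneg f
  · exact le_of_mul_le_mul_right h h0

theorem apply_self_le (hnonneg : ∀ (j : Fin d) (v : E), 0 ≤ B j v v)
    (hsum : ∀ v w : E, ∑ j, B j v w = ⟪v, w⟫_ℝ) (hy : ∀ j, 1 ≤ y j) (hu : IsSolE B f y u)
    (j : Fin d) :
    B j u u ≤ ‖f‖ ^ 2 * ((y j)⁻¹).toReal := by
  by_cases h : y j = ∞
  · simp [h, hu.1 j h]
  have hpos : 0 < (y j).toReal :=
    ENNReal.toReal_pos (one_pos.trans_le (hy j)).ne' h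
  rw [ENNReal.toReal_inv, ← div_eq_mul_inv, le_div_iff₀ hpos]
  calc B j u u * (y j).toReal = (y j).toReal * B j u u := mul_comm _ _
    _ ≤ ∑ i, (y i).toReal * B i u u :=
      Finset.single_le_sum (fun i _ => mul_nonneg ENNReal.toReal_nonneg (hnonneg i u))
        (Finset.mem_univ j)
    _ = f u := hu.2 u hu.1
    _ ≤ ‖f‖ * ‖u‖ := (Real.le_norm_self _).trans (f.le_opNorm u)
    _ ≤ ‖f‖ ^ 2 := by
      rw [sq]
      exact mul_le_mul_of_nonneg_left (hu.norm_le hnonneg hsum hy) (norm_nonneg f)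

theorem norm_comp_subtypeL_le (hsymm : ∀ (j : Fin d) (v w : E), B j v w = B j w v)
    (hnonneg : ∀ (j : Fin d) (v : E), 0 ≤ B j v v)
    (hsum : ∀ v w : E, ∑ j, B j v w = ⟪v, w⟫_ℝ) (hu : IsSolE B f y u)
    {W : Submodule ℝ E} {j : Fin d} (hW : ∀ v ∈ W, ∀ i, i ≠ j → B i v = 0) (hyj : y j = 1) :
    ‖f.comp W.subtypeL‖ ≤ ‖u‖ := by
  refine ContinuousLinearMap.opNorm_le_bound _ (norm_nonneg u) fun v => ?_
  have hvS : (v : E) ∈ VS B {i | y i = ∞} := fun i hi =>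
    hW v v.2 i fun hij => by simp [hij, hyj] at hi
  have hfv : f v = B j u v := by
    rw [← hu.2 v hvS, Finset.sum_eq_single j (fun i _ hij => by simp [hsymm i u, hW v v.2 i hij])
      (by simp), hyj, ENNReal.toReal_one, one_mul]
  calc ‖(f.comp W.subtypeL) v‖ = |B j u v| := by simp [hfv]
    _ ≤ √(B j u u) * ‖(v : E)‖ := abs_apply_le_sqrt_mul_norm hsymm hnonneg hsum j u v
    _ ≤ ‖u‖ * ‖v‖ := by
      refine mul_le_mul_of_nonneg_right ?_ (norm_nonneg _)
      exact (Real.sqrt_le_sqrt (apply_self_le_norm_sq hnonneg hsum j u)).trans_eq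
        (Real.sqrt_sq (norm_nonneg u))

theorem norm_sub_sq_le (hsymm : ∀ (j : Fin d) (v w : E), B j v w = B j w v)
    (hnonneg : ∀ (j : Fin d) (v : E), 0 ≤ B j v v)
    (hsum : ∀ v w : E, ∑ j, B j v w = ⟪v, w⟫_ℝ) (hy : ∀ j, 1 ≤ y j) (hu : IsSolE B f y u)
    {w : E} (hw : w ∈ VS B {j | y j = ∞}) :
    ‖u - w‖ ^ 2 ≤ f u - 2 * f w + ∑ j, (y j).toReal * B j w w := by
  calc ‖u - w‖ ^ 2 ≤ ∑ j, (y j).toReal * B j (u - w) (u - w) :=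
        norm_sq_le_sum_toReal_mul hnonneg hsum hy (sub_mem hu.1 hw)
    _ = ∑ j, (y j).toReal * B j u u - 2 * ∑ j, (y j).toReal * B j u w
          + ∑ j, (y j).toReal * B j w w := by
      rw [Finset.mul_sum, ← Finset.sum_sub_distrib, ← Finset.sum_add_distrib]
      refine Finset.sum_congr rfl fun j _ => ?_
      simp only [map_sub, sub_apply, hsymm j w u]
      ring
    _ = f u - 2 * f w + ∑ j, (y j).toReal * B j w w := by rw [hu.2 u hu.1, hu.2 w hw]

end IsSolE

theorem Filter.Tendsto.toReal_mul {ι : Type*} {l : Filter ι} {x : ι → ℝ≥0∞} {x₀ : ℝ≥0∞}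
    {a : ι → ℝ} {b : ℝ} (hx : Tendsto x l (𝓝 x₀)) (ha : Tendsto a l (𝓝 b))
    (htop : x₀ = ∞ → ∀ i, a i = 0) :
    Tendsto (fun i => (x i).toReal * a i) l (𝓝 (x₀.toReal * b)) := by
  by_cases h : x₀ = ∞
  · simpa [h, htop h] using tendsto_const_nhds
  · exact ((ENNReal.tendsto_toReal h).comp hx).mul ha

theorem Ultrafilter.exists_forall_tendsto_apply_of_eventually_norm_le [CompleteSpace E]
    {ι : Type*} (𝒰 : Ultrafilter ι) {u : ι → E} {R : ℝ} (h : ∀ᶠ i in 𝒰, ‖u i‖ ≤ R) :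
    ∃ w : E, ∀ ψ : E →L[ℝ] ℝ, Tendsto (fun i => ψ (u i)) 𝒰 (𝓝 (ψ w)) := by
  let T : ι → WeakDual ℝ E := fun i => StrongDual.toWeakDual (InnerProductSpace.toDual ℝ E (u i))
  have hball : ∀ᶠ i in 𝒰, T i ∈ WeakDual.toStrongDual ⁻¹' Metric.closedBall 0 R :=
    h.mono fun i hi => by simpa [T] using hi
  obtain ⟨g, -, hg⟩ := (WeakDual.isCompact_closedBall (0 : StrongDual ℝ E) R).ultrafilter_le_nhds'
    (𝒰.map T) hball
  refine ⟨(InnerProductSpace.toDual ℝ E).symm (WeakDual.toStrongDual g), fun ψ => ?_⟩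
  set z := (InnerProductSpace.toDual ℝ E).symm ψ
  have hψ : ∀ x, ψ x = ⟪x, z⟫_ℝ := fun x => by
    rw [real_inner_comm, InnerProductSpace.toDual_symm_apply]
  simp only [hψ, InnerProductSpace.toDual_symm_apply]
  exact ((WeakDual.eval_continuous z).tendsto g).comp (tendsto_map'_iff.mp hg)

section Limit

variable {ι : Type*} {l : Filter ι} {Y : ι → Fin d → ℝ≥0∞} {y₀ : Fin d → ℝ≥0∞} {u : ι → E}
  {w : E}

theorem eventually_VS_le (hY : Tendsto Y l (𝓝 y₀)) :
    ∀ᶠ i in l, VS B {j | y₀ j = ∞} ≤ VS B {j | Y i j = ∞} := by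
  have h : ∀ᶠ i in l, ∀ j, y₀ j ≠ ∞ → Y i j ≠ ∞ := by
    refine eventually_all.mpr fun j => ?_
    by_cases hj : y₀ j = ∞
    · exact Eventually.of_forall fun _ h => absurd hj h
    · exact ((tendsto_pi_nhds.mp hY j).eventually_ne hj).mono fun _ h _ => h
  exact h.mono fun i hi => VS_anti fun j hj => by_contra fun hne => hi j hne hj

theorem tendsto_apply_self_of_eq_top (hnonneg : ∀ (j : Fin d) (v : E), 0 ≤ B j v v)
    (hsum : ∀ v w : E, ∑ j, B j v w = ⟪v, w⟫_ℝ)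
    (hsol : ∀ᶠ i in l, (∀ j, 1 ≤ Y i j) ∧ IsSolE B f (Y i) (u i))
    (hY : Tendsto Y l (𝓝 y₀)) {j : Fin d} (hj : y₀ j = ∞) :
    Tendsto (fun i => B j (u i) (u i)) l (𝓝 0) := by
  have hinv : Tendsto (fun i => ((Y i j)⁻¹).toReal) l (𝓝 0) := by
    have h : Tendsto (fun i => (Y i j)⁻¹) l (𝓝 0) := by
      simpa [hj] using (tendsto_pi_nhds.mp hY j).inv
    exact (ENNReal.tendsto_toReal ENNReal.zero_ne_top).comp h
  refine squeeze_zero' (Eventually.of_forall fun i => hnonneg j (u i))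
    (hsol.mono fun i hi => hi.2.apply_self_le hnonneg hsum hi.1 j) ?_
  simpa using hinv.const_mul (‖f‖ ^ 2)

theorem mem_VS_of_tendsto_s3 (hsymm : ∀ (j : Fin d) (v w : E), B j v w = B j w v)
    (hnonneg : ∀ (j : Fin d) (v : E), 0 ≤ B j v v)
    (hsum : ∀ v w : E, ∑ j, B j v w = ⟪v, w⟫_ℝ)
    (hsol : ∀ᶠ i in l, (∀ j, 1 ≤ Y i j) ∧ IsSolE B f (Y i) (u i))
    (hY : Tendsto Y l (𝓝 y₀))
    (hweak : ∀ ψ : E →L[ℝ] ℝ, Tendsto (fun i => ψ (u i)) l (𝓝 (ψ w))) [l.NeBot] :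
    w ∈ VS B {j | y₀ j = ∞} := by
  intro j hj
  ext v
  have hlim : Tendsto (fun i => B j (u i) v) l (𝓝 (B j w v)) := by
    simpa using hweak ((B j).flip v)
  have hzero : Tendsto (fun i => B j (u i) v) l (𝓝 0) := by
    refine squeeze_zero_norm (fun i => (Real.norm_eq_abs _).trans_le
      (abs_apply_le_sqrt_mul_norm hsymm hnonneg hsum j (u i) v)) ?_
    simpa using (tendsto_apply_self_of_eq_top hnonneg hsum hsol hY hj).sqrt.mul_const ‖v‖
  simpa using tendsto_nhds_unique hlim hzero

theorem isSolE_of_tendsto (hsymm : ∀ (j : Fin d) (v w : E), B j v w = B j w v)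
    (hnonneg : ∀ (j : Fin d) (v : E), 0 ≤ B j v v)
    (hsum : ∀ v w : E, ∑ j, B j v w = ⟪v, w⟫_ℝ)
    (hsol : ∀ᶠ i in l, (∀ j, 1 ≤ Y i j) ∧ IsSolE B f (Y i) (u i))
    (hY : Tendsto Y l (𝓝 y₀))
    (hweak : ∀ ψ : E →L[ℝ] ℝ, Tendsto (fun i => ψ (u i)) l (𝓝 (ψ w))) [l.NeBot] :
    IsSolE B f y₀ w := by
  refine ⟨mem_VS_of_tendsto_s3 hsymm hnonneg hsum hsol hY hweak, fun v hv => ?_⟩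
  have hterm : ∀ j, Tendsto (fun i => (Y i j).toReal * B j (u i) v) l
      (𝓝 ((y₀ j).toReal * B j w v)) := fun j =>
    (tendsto_pi_nhds.mp hY j).toReal_mul (by simpa using hweak ((B j).flip v))
      fun hj i => by rw [hsymm, hv j hj, zero_apply]
  have heq : (fun i => ∑ j, (Y i j).toReal * B j (u i) v) =ᶠ[l] fun _ => f v := by
    filter_upwards [hsol, eventually_VS_le (B := B) hY] with i hi hle using hi.2.2 v (hle hv)
  exact tendsto_nhds_unique ((tendsto_finsetSum _ fun j _ => hterm j).congr' heq)
    tendsto_const_nhds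

theorem tendsto_of_tendsto_weak (hsymm : ∀ (j : Fin d) (v w : E), B j v w = B j w v)
    (hnonneg : ∀ (j : Fin d) (v : E), 0 ≤ B j v v)
    (hsum : ∀ v w : E, ∑ j, B j v w = ⟪v, w⟫_ℝ)
    (hsol : ∀ᶠ i in l, (∀ j, 1 ≤ Y i j) ∧ IsSolE B f (Y i) (u i))
    (hY : Tendsto Y l (𝓝 y₀))
    (hweak : ∀ ψ : E →L[ℝ] ℝ, Tendsto (fun i => ψ (u i)) l (𝓝 (ψ w))) [l.NeBot] :
    Tendsto u l (𝓝 w) := by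
  have hw := isSolE_of_tendsto hsymm hnonneg hsum hsol hY hweak
  have hbound : ∀ᶠ i in l,
      ‖u i - w‖ ^ 2 ≤ f (u i) - 2 * f w + ∑ j, (Y i j).toReal * B j w w := by
    filter_upwards [hsol, eventually_VS_le (B := B) hY] with i hi hle
    exact hi.2.norm_sub_sq_le hsymm hnonneg hsum hi.1 (hle hw.1)
  have hrhs : Tendsto (fun i => f (u i) - 2 * f w + ∑ j, (Y i j).toReal * B j w w) l (𝓝 0) := by
    have hterm : ∀ j, Tendsto (fun i => (Y i j).toReal * B j w w) l
        (𝓝 ((y₀ j).toReal * B j w w)) := fun j =>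
      (tendsto_pi_nhds.mp hY j).toReal_mul tendsto_const_nhds fun hj _ => by simp [hw.1 j hj]
    have h := ((hweak f).sub_const (2 * f w)).add (tendsto_finsetSum Finset.univ fun j _ => hterm j)
    rwa [hw.2 w hw.1, show f w - 2 * f w + f w = 0 by ring] at h
  have hsq := squeeze_zero' (Eventually.of_forall fun i => sq_nonneg _) hbound hrhs
  rw [tendsto_iff_norm_sub_tendsto_zero]
  simpa using hsq.sqrt

end Limit

theorem isCompact_setOf_isSolE [CompleteSpace E]
    (hsymm : ∀ (j : Fin d) (v w : E), B j v w = B j w v)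
    (hnonneg : ∀ (j : Fin d) (v : E), 0 ≤ B j v v)
    (hsum : ∀ v w : E, ∑ j, B j v w = ⟪v, w⟫_ℝ) {K : Set (Fin d → ℝ≥0∞)} (hK : IsClosed K)
    (hK1 : ∀ y ∈ K, ∀ j, 1 ≤ y j) :
    IsCompact {p : (Fin d → ℝ≥0∞) × E | p.1 ∈ K ∧ IsSolE B f p.1 p.2} := by
  rw [isCompact_iff_ultrafilter_le_nhds']
  intro 𝒰 h𝒰
  have hK𝒰 : ∀ᶠ p in (𝒰 : Filter ((Fin d → ℝ≥0∞) × E)), p.1 ∈ K :=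
    mem_of_superset h𝒰 fun p hp => hp.1
  have hsol : ∀ᶠ p in (𝒰 : Filter ((Fin d → ℝ≥0∞) × E)),
      (∀ j, 1 ≤ p.1 j) ∧ IsSolE B f p.1 p.2 :=
    mem_of_superset h𝒰 fun p hp => ⟨hK1 _ hp.1, hp.2⟩
  have hY : Tendsto Prod.fst (𝒰 : Filter ((Fin d → ℝ≥0∞) × E)) (𝓝 (𝒰.map Prod.fst).lim) :=
    (𝒰.map Prod.fst).le_nhds_lim
  obtain ⟨w, hweak⟩ := 𝒰.exists_forall_tendsto_apply_of_eventually_norm_le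
    (hsol.mono fun p hp => hp.2.norm_le hnonneg hsum hp.1)
  exact ⟨(_, w), ⟨hK.mem_of_tendsto hY hK𝒰, isSolE_of_tendsto hsymm hnonneg hsum hsol hY hweak⟩,
    hY.prodMk_nhds (tendsto_of_tendsto_weak hsymm hnonneg hsum hsol hY hweak)⟩

end

theorem statement3_general
    {V : Type*} [NormedAddCommGroup V] [InnerProductSpace ℝ V] [CompleteSpace V]
    {d : ℕ}
    (B : Fin d → V →L[ℝ] V →L[ℝ] ℝ)
    (hsymm : ∀ (j : Fin d) (v w : V), B j v w = B j w v)
    (hnonneg : ∀ (j : Fin d) (v : V), 0 ≤ B j v v)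
    (hsum : ∀ v w : V, ∑ j, B j v w = ⟪v, w⟫_ℝ)
    (f : V →L[ℝ] ℝ)
    (Wloc : Fin d → Submodule ℝ V)
    (hWloc : ∀ j : Fin d, ∀ v ∈ Wloc j, ∀ i : Fin d, i ≠ j → B i v = 0)
 :
    IsCompact {u : V | ∃ y : Fin d → ℝ≥0∞, (∀ j, 1 ≤ y j) ∧ (∃ j, y j = 1) ∧ IsSolE B f y u} ∧
    ∀ u ∈ {u : V | ∃ y : Fin d → ℝ≥0∞, (∀ j, 1 ≤ y j) ∧ (∃ j, y j = 1) ∧ IsSolE B f y u},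
      (⨅ j : Fin d, ‖f.comp (Wloc j).subtypeL‖) ≤ ‖u‖ ∧ ‖u‖ ≤ ‖f‖ := by
  have hK : IsClosed {y : Fin d → ℝ≥0∞ | (∀ j, 1 ≤ y j) ∧ ∃ j, y j = 1} := by
    simp only [Set.ofPred_and, Set.ofPred_forall, Set.ofPred_exists]
    exact (isClosed_iInter fun j => isClosed_le continuous_const (continuous_apply j)).inter
      (isClosed_iUnion_of_finite fun j => isClosed_eq (continuous_apply j) continuous_const)
  refine ⟨?_, ?_⟩
  · convert (isCompact_setOf_isSolE (f := f) hsymm hnonneg hsum hK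
      fun y hy => hy.1).image continuous_snd using 1
    ext u
    simp [and_assoc]
  · rintro u ⟨y, hy, ⟨j, hj⟩, hu⟩
    exact ⟨ciInf_le_of_le (Set.finite_range _).bddBelow j
        (hu.norm_comp_subtypeL_le hsymm hnonneg hsum (hWloc j) hj),
      hu.norm_le hnonneg hsum hy⟩

/-- Lemma 2.3: the normalized solution set `𝓝` is compact and
every `u(y) ∈ 𝓝` satisfies `min_j ‖f‖_{H^{-1}(Ω_j)} ≤ ‖u(y)‖ ≤ C_f`. -/
theorem statement3
    {V : Type*} [NormedAddCommGroup V] [InnerProductSpace ℝ V] [CompleteSpace V]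
    {d : ℕ}
    (hd : 0 < d)
    (B : Fin d → V →L[ℝ] V →L[ℝ] ℝ)
    (hsymm : ∀ (j : Fin d) (v w : V), B j v w = B j w v)
    (hnonneg : ∀ (j : Fin d) (v : V), 0 ≤ B j v v)
    (hsum : ∀ v w : V, ∑ j, B j v w = ⟪v, w⟫_ℝ)
    (f : V →L[ℝ] ℝ)
    (Wloc : Fin d → Submodule ℝ V)
    (hWloc : ∀ j : Fin d, ∀ v ∈ Wloc j, ∀ i : Fin d, i ≠ j → B i v = 0)
 :
    IsCompact {u : V | ∃ y : Fin d → ℝ≥0∞, (∀ j, 1 ≤ y j) ∧ (∃ j, y j = 1) ∧ IsSolE B f y u} ∧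
    ∀ u ∈ {u : V | ∃ y : Fin d → ℝ≥0∞, (∀ j, 1 ≤ y j) ∧ (∃ j, y j = 1) ∧ IsSolE B f y u},
      (⨅ j : Fin d, ‖f.comp (Wloc j).subtypeL‖) ≤ ‖u‖ ∧ ‖u‖ ≤ ‖f‖ :=
  statement3_general B hsymm hnonneg hsum f Wloc hWloc

end
end

section
/- Let R = [a_1,2a_1] × ⋯ × [a_d,2a_d] with a_j ≥ 1 for all j. Then for each integer k ≥ 0 there exist functions u_ν ∈ H^1_0(Ω), indexed by multi-indices ν ∈ ℕ^d with |ν| ≤ k, such that ‖u(y) − Σ_{|ν|≤k} u_ν y^ν‖_y ≤ (C_f/√3) · 3^{-k} for all y ∈ R, where y^ν := y_1^{ν_1}⋯y_d^{ν_d}. -/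
open scoped BigOperators ENNReal InnerProductSpace
open Filter

noncomputable section

variable {V : Type*} [NormedAddCommGroup V] [InnerProductSpace ℝ V] [CompleteSpace V]

set_option linter.unusedSectionVars false

section AuxLemmas

lemma bil_cauchy_schwarz (b : V →L[ℝ] V →L[ℝ] ℝ) (hs : ∀ v w, b v w = b w v)
    (hn : ∀ v, 0 ≤ b v v) (v w : V) : (b v w) ^ 2 ≤ b v v * b w w := by
  have h : ∀ t : ℝ, 0 ≤ b w w * (t * t) + (2 * b v w) * t + b v v := by
    intro t
    have h0 := hn (v + t • w)
    simp only [map_add, map_smul, ContinuousLinearMap.add_apply,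
      ContinuousLinearMap.smul_apply, smul_eq_mul] at h0
    rw [← hs v w] at h0
    nlinarith [h0]
  have h2 := discrim_le_zero h
  rw [discrim] at h2
  nlinarith

lemma mem_mIdx {d n : ℕ} {ν : Fin d → ℕ} : ν ∈ mIdx d n ↔ ∑ j, ν j ≤ n := by
  unfold mIdx
  simp only [Finset.mem_filter, Fintype.mem_piFinset, Finset.mem_range]
  constructor
  · exact fun h => h.2
  · intro h
    refine ⟨fun j => ?_, h⟩
    have := Finset.single_le_sum (f := ν) (fun i _ => Nat.zero_le _) (Finset.mem_univ j)
    omega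

lemma mIdx_subset {d n m : ℕ} (h : n ≤ m) : mIdx d n ⊆ mIdx d m := by
  intro ν hν
  rw [mem_mIdx] at *
  omega

lemma mono_add_single {d : ℕ} (y : Fin d → ℝ) (ν : Fin d → ℕ) (j : Fin d) :
    mono y (fun i => ν i + if i = j then 1 else 0) = y j * mono y ν := by
  unfold mono
  simp only [pow_add]
  rw [Finset.prod_mul_distrib]
  have h1 : ∀ i : Fin d, y i ^ (if i = j then 1 else 0) = if i = j then y i else 1 := by
    intro i; split <;> simp
  rw [Finset.prod_congr rfl (fun i _ => h1 i), Finset.prod_ite_eq' Finset.univ j y]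
  simp [mul_comm]

def PolyDeg {d : ℕ} (n : ℕ) (F : (Fin d → ℝ) → V) : Prop :=
  ∃ c : (Fin d → ℕ) → V, ∀ y, F y = ∑ ν ∈ mIdx d n, mono y ν • c ν

lemma mIdx_zero {d : ℕ} : mIdx d 0 = {fun _ => 0} := by
  ext ν
  rw [mem_mIdx, Finset.mem_singleton]
  constructor
  · intro h
    funext j
    have := Finset.single_le_sum (f := ν) (fun i _ => Nat.zero_le _) (Finset.mem_univ j)
    omega
  · intro h; subst h; simp

lemma polyDeg_const {d : ℕ} (v : V) : PolyDeg (d := d) 0 (fun _ => v) := by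
  refine ⟨fun _ => v, fun y => ?_⟩
  rw [mIdx_zero, Finset.sum_singleton]
  simp [mono]

lemma polyDeg_zero {d n : ℕ} : PolyDeg (d := d) n (fun _ => (0 : V)) :=
  ⟨fun _ => 0, fun y => by simp⟩

lemma PolyDeg.mono_le {d n m : ℕ} {F : (Fin d → ℝ) → V} (h : n ≤ m) (hF : PolyDeg n F) :
    PolyDeg m F := by
  classical
  obtain ⟨c, hc⟩ := hF
  refine ⟨fun ν => if ν ∈ mIdx d n then c ν else 0, fun y => ?_⟩
  rw [hc y, ← Finset.sum_subset (mIdx_subset h)]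
  · refine Finset.sum_congr rfl fun ν hν => by simp [hν]
  · intro ν _ hν
    simp [hν]

lemma PolyDeg.add {d n : ℕ} {F G : (Fin d → ℝ) → V} (hF : PolyDeg n F) (hG : PolyDeg n G) :
    PolyDeg n (fun y => F y + G y) := by
  obtain ⟨c, hc⟩ := hF; obtain ⟨e, he⟩ := hG
  exact ⟨fun ν => c ν + e ν, fun y => by
    show F y + G y = _
    rw [hc, he, ← Finset.sum_add_distrib]
    exact Finset.sum_congr rfl fun ν _ => (smul_add _ _ _).symm⟩

lemma PolyDeg.sub {d n : ℕ} {F G : (Fin d → ℝ) → V} (hF : PolyDeg n F) (hG : PolyDeg n G) :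
    PolyDeg n (fun y => F y - G y) := by
  obtain ⟨c, hc⟩ := hF; obtain ⟨e, he⟩ := hG
  exact ⟨fun ν => c ν - e ν, fun y => by
    show F y - G y = _
    rw [hc, he, ← Finset.sum_sub_distrib]
    exact Finset.sum_congr rfl fun ν _ => (smul_sub _ _ _).symm⟩

lemma PolyDeg.map {d n : ℕ} {F : (Fin d → ℝ) → V} (L : V →L[ℝ] V) (hF : PolyDeg n F) :
    PolyDeg n (fun y => L (F y)) := by
  obtain ⟨c, hc⟩ := hF
  exact ⟨fun ν => L (c ν), fun y => by show L (F y) = _; rw [hc]; simp [map_sum, map_smul]⟩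

lemma PolyDeg.rsmul {d n : ℕ} {F : (Fin d → ℝ) → V} (r : ℝ) (hF : PolyDeg n F) :
    PolyDeg n (fun y => r • F y) := by
  obtain ⟨c, hc⟩ := hF
  exact ⟨fun ν => r • c ν, fun y => by
    show r • F y = _
    rw [hc, Finset.smul_sum]
    exact Finset.sum_congr rfl fun ν _ => smul_comm _ _ _⟩

lemma PolyDeg.finsetSum {ι : Type*} {d n : ℕ} (s : Finset ι) (F : ι → (Fin d → ℝ) → V)
    (h : ∀ i ∈ s, PolyDeg n (F i)) : PolyDeg n (fun y => ∑ i ∈ s, F i y) := by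
  classical
  induction s using Finset.cons_induction with
  | empty => simpa using polyDeg_zero
  | cons i s hi ih =>
    simp only [Finset.sum_cons]
    exact (h i (Finset.mem_cons_self i s)).add
      (ih fun j hj => h j (Finset.mem_cons.2 (Or.inr hj)))

lemma PolyDeg.mulCoord {d n : ℕ} {F : (Fin d → ℝ) → V} (j : Fin d) (hF : PolyDeg n F) :
    PolyDeg (n+1) (fun y => y j • F y) := by
  classical
  obtain ⟨c, hc⟩ := hF
  set add : (Fin d → ℕ) → (Fin d → ℕ) := fun μ i => μ i + if i = j then 1 else 0 with hadd
  set sub : (Fin d → ℕ) → (Fin d → ℕ) := fun ν i => ν i - if i = j then 1 else 0 with hsub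
  have hsum_add : ∀ μ : Fin d → ℕ, ∑ i, add μ i = (∑ i, μ i) + 1 := by
    intro μ
    rw [hadd]
    simp only []
    rw [Finset.sum_add_distrib]
    congr 1
    simp
  have h_left : ∀ μ : Fin d → ℕ, sub (add μ) = μ := by
    intro μ; funext i; by_cases h : i = j <;> simp [hadd, hsub, h]
  have h_right : ∀ ν : Fin d → ℕ, ν j ≠ 0 → add (sub ν) = ν := by
    intro ν hν; funext i; by_cases h : i = j <;> simp [hadd, hsub, h]
    · subst h; omega
  refine ⟨fun ν => if ν j = 0 then 0 else c (sub ν), fun y => ?_⟩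
  simp only []
  rw [hc y, Finset.smul_sum]
  have step1 : ∀ μ ∈ mIdx d n,
      y j • (mono y μ • c μ) = mono y (add μ) • (if (add μ) j = 0 then (0:V) else c (sub (add μ))) := by
    intro μ _
    have : (add μ) j = μ j + 1 := by simp [hadd]
    rw [smul_smul, h_left μ, if_neg (by omega)]
    rw [hadd]
    rw [mono_add_single]
  rw [Finset.sum_congr rfl step1]
  rw [← Finset.sum_filter_of_ne (p := fun ν => ν j ≠ 0)
    (f := fun ν => mono y ν • (if ν j = 0 then (0:V) else c (sub ν)))]
  · refine Finset.sum_nbij' add sub ?_ ?_ ?_ ?_ ?_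
    · intro μ hμ
      rw [Finset.mem_filter]
      constructor
      · rw [mem_mIdx, hsum_add]
        rw [mem_mIdx] at hμ
        omega
      · simp [hadd]
    · intro ν hν
      rw [Finset.mem_filter] at hν
      obtain ⟨hν1, hν2⟩ := hν
      rw [mem_mIdx] at hν1 ⊢
      have := hsum_add (sub ν)
      rw [h_right ν hν2] at this
      omega
    · exact fun μ _ => h_left μ
    · intro ν hν
      rw [Finset.mem_filter] at hν
      exact h_right ν hν.2
    · intro μ _
      rfl
  · intro ν _ hν
    intro h0
    apply hν
    rw [if_pos h0, smul_zero]

end AuxLemmas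

set_option maxHeartbeats 2000000 in
lemma statement5_main
    {V : Type*} [NormedAddCommGroup V] [InnerProductSpace ℝ V] [CompleteSpace V]
    {d : ℕ}
    (B : Fin d → V →L[ℝ] V →L[ℝ] ℝ)
    (hsymm : ∀ (j : Fin d) (v w : V), B j v w = B j w v)
    (hnonneg : ∀ (j : Fin d) (v : V), 0 ≤ B j v v)
    (hsum : ∀ v w : V, ∑ j, B j v w = ⟪v, w⟫_ℝ)
    (f : V →L[ℝ] ℝ)
    (a : Fin d → ℝ) (ha : ∀ j, 1 ≤ a j) (k : ℕ) :
    ∃ c : (Fin d → ℕ) → V,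
      ∀ y : Fin d → ℝ, (∀ j, a j ≤ y j ∧ y j ≤ 2 * a j) →
        ∀ u : V, IsWeakSol B f y u →
          eNorm B y (u - ∑ ν ∈ mIdx d k, mono y ν • c ν)
            ≤ ‖f‖ / Real.sqrt 3 * (3 : ℝ) ^ (-(k : ℤ)) := by
  classical
  set yb : Fin d → ℝ := fun j => 3/2 * a j with hyb
  have hyb1 : ∀ j, 1 ≤ yb j := fun j => by
    have := ha j; rw [hyb]; dsimp only; linarith
  have hyb0 : ∀ j, 0 ≤ yb j := fun j => le_trans zero_le_one (hyb1 j)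
  set bb : V →L[ℝ] V →L[ℝ] ℝ := ∑ j, yb j • B j with hbb
  have hbbapp : ∀ v w : V, bb v w = ∑ j, yb j * B j v w := by
    intro v w
    rw [hbb]
    simp [ContinuousLinearMap.sum_apply, ContinuousLinearMap.smul_apply]
  have hbbs : ∀ v w : V, bb v w = bb w v := by
    intro v w
    rw [hbbapp, hbbapp]
    exact Finset.sum_congr rfl fun j _ => by rw [hsymm j v w]
  have hbbnn : ∀ v : V, 0 ≤ bb v v := by
    intro v
    rw [hbbapp]
    exact Finset.sum_nonneg fun j _ => mul_nonneg (hyb0 j) (hnonneg j v)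
  have hlow : ∀ v : V, ‖v‖ ^ 2 ≤ bb v v := by
    intro v
    calc ‖v‖ ^ 2 = ⟪v, v⟫_ℝ := (real_inner_self_eq_norm_sq v).symm
      _ = ∑ j, B j v v := (hsum v v).symm
      _ ≤ ∑ j, yb j * B j v v :=
        Finset.sum_le_sum fun j _ => le_mul_of_one_le_left (hnonneg j v) (hyb1 j)
      _ = bb v v := (hbbapp v v).symm
  have coercive : IsCoercive bb := by
    refine ⟨1, one_pos, fun v => ?_⟩
    have := hlow v
    nlinarith [norm_nonneg v]
  set E := coercive.continuousLinearEquivOfBilin with hE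
  set u0 : V := E.symm ((InnerProductSpace.toDual ℝ V).symm f) with hu0
  have hu0b : ∀ w : V, bb u0 w = f w := by
    intro w
    rw [← coercive.continuousLinearEquivOfBilin_apply, ← hE, hu0, E.apply_symm_apply]
    exact InnerProductSpace.toDual_symm_apply
  set Mop : Fin d → V →L[ℝ] V := fun j =>
    (E.symm : V →L[ℝ] V) ∘L InnerProductSpace.continuousLinearMapOfBilin (𝕜 := ℝ) (B j)
    with hMop
  have hMopb : ∀ (j : Fin d) (v w : V), bb (Mop j v) w = B j v w := by
    intro j v w
    rw [← coercive.continuousLinearEquivOfBilin_apply, ← hE, hMop]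
    simp only [ContinuousLinearMap.comp_apply, ContinuousLinearEquiv.coe_coe]
    rw [E.apply_symm_apply]
    exact InnerProductSpace.continuousLinearMapOfBilin_apply (𝕜 := ℝ) (B j) v w
  set My : (Fin d → ℝ) → V →L[ℝ] V := fun y => ∑ j, (yb j - y j) • Mop j with hMy
  have hMyapp : ∀ (y : Fin d → ℝ) (v : V), My y v = ∑ j, (yb j - y j) • Mop j v := by
    intro y v
    rw [hMy]
    simp [ContinuousLinearMap.sum_apply, ContinuousLinearMap.smul_apply]
  have hMyb : ∀ (y : Fin d → ℝ) (v w : V), bb (My y v) w = ∑ j, (yb j - y j) * B j v w := by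
    intro y v w
    rw [hMyapp, map_sum, ContinuousLinearMap.sum_apply]
    refine Finset.sum_congr rfl fun j _ => ?_
    rw [map_smul, ContinuousLinearMap.smul_apply, smul_eq_mul, hMopb]
  have hinj : ∀ x : V, (∀ w, bb x w = 0) → x = 0 := by
    intro x hx
    have h1 := hlow x
    rw [hx x] at h1
    have : ‖x‖ = 0 := by nlinarith [norm_nonneg x]
    exact norm_eq_zero.mp this
  -- polynomial representation
  have hT : ∀ n : ℕ, PolyDeg n (fun y => ((My y) ^ n) u0) := by
    intro n
    induction n with
    | zero => simpa using polyDeg_const (d := d) u0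
    | succ n ih =>
      have heq : (fun y : Fin d → ℝ => ((My y) ^ (n+1)) u0)
          = fun y => ∑ j, (yb j • Mop j (((My y) ^ n) u0) - y j • Mop j (((My y) ^ n) u0)) := by
        funext y
        rw [pow_succ', ContinuousLinearMap.mul_apply, hMyapp]
        exact Finset.sum_congr rfl fun j _ => by rw [sub_smul]
      rw [heq]
      refine PolyDeg.finsetSum _ _ fun j _ => ?_
      have hG : PolyDeg n (fun y => Mop j (((My y) ^ n) u0)) := ih.map (Mop j)
      exact ((hG.rsmul (yb j)).mono_le (Nat.le_succ n)).sub (hG.mulCoord j)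
  have hS : PolyDeg k (fun y => ∑ n ∈ Finset.range (k+1), ((My y) ^ n) u0) := by
    refine PolyDeg.finsetSum _ _ fun n hn => ?_
    exact (hT n).mono_le (by simpa [Nat.lt_succ_iff] using Finset.mem_range.mp hn)
  obtain ⟨c, hc⟩ := hS
  refine ⟨c, ?_⟩
  intro y hy u hu
  -- fixed point identity
  have hfwd : ∀ w, f w = ∑ j, y j * B j u w := fun w => (hu w).symm
  have hfix : u = u0 + My y u := by
    have hzero : ∀ w, bb (u0 + My y u - u) w = 0 := by
      intro w
      rw [map_sub, map_add, ContinuousLinearMap.sub_apply, ContinuousLinearMap.add_apply]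
      rw [hu0b w, hMyb, hbbapp, hfwd w]
      rw [Finset.sum_congr rfl (fun j (_ : j ∈ Finset.univ) => sub_mul (yb j) (y j) (B j u w)),
        Finset.sum_sub_distrib]
      ring
    have := hinj _ hzero
    rw [sub_eq_zero] at this
    exact this.symm
  have hsubu : u - u0 = My y u := by
    conv_lhs => rw [hfix]
    rw [add_sub_cancel_left]
  have herr : ∀ m : ℕ, u - ∑ n ∈ Finset.range (m+1), ((My y) ^ n) u0 = ((My y) ^ (m+1)) u := by
    intro m
    induction m with
    | zero => simpa using hsubu
    | succ m ih =>
      rw [Finset.sum_range_succ, sub_add_eq_sub_sub, ih, ← map_sub, hsubu,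
        ← ContinuousLinearMap.mul_apply, ← pow_succ]
  -- norms
  set NN : V → ℝ := fun v => Real.sqrt (bb v v) with hNN
  have hNNnn : ∀ v, 0 ≤ NN v := fun v => Real.sqrt_nonneg _
  have hNNsq : ∀ v, NN v ^ 2 = bb v v := fun v => Real.sq_sqrt (hbbnn v)
  have hyabs : ∀ j, |yb j - y j| ≤ a j / 2 := by
    intro j
    have h1 := (hy j).1; have h2 := (hy j).2
    rw [abs_le, hyb]
    constructor <;> dsimp only <;> linarith
  -- contraction
  have hcontr : ∀ v : V, NN (My y v) ≤ 3⁻¹ * NN v := by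
    intro v
    set e := My y v with he
    have h1 : bb e e ≤ ∑ j, (3:ℝ)⁻¹ * (Real.sqrt (yb j * B j v v) * Real.sqrt (yb j * B j e e)) := by
      rw [he, hMyb]
      refine Finset.sum_le_sum fun j _ => ?_
      have hcs : |B j v e| ≤ Real.sqrt (B j v v) * Real.sqrt (B j e e) := by
        rw [← Real.sqrt_mul (hnonneg j v)]
        rw [← Real.sqrt_sq_eq_abs]
        exact Real.sqrt_le_sqrt (bil_cauchy_schwarz (B j) (hsymm j) (hnonneg j) v e)
      calc (yb j - y j) * B j v e ≤ |yb j - y j| * |B j v e| := by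
            rw [← abs_mul]; exact le_abs_self _
        _ ≤ (a j / 2) * (Real.sqrt (B j v v) * Real.sqrt (B j e e)) := by
            apply mul_le_mul (hyabs j) hcs (abs_nonneg _)
            have := ha j; linarith
        _ = 3⁻¹ * (Real.sqrt (yb j) * Real.sqrt (B j v v) * (Real.sqrt (yb j) * Real.sqrt (B j e e))) := by
            rw [mul_mul_mul_comm, ← Real.sqrt_mul (hyb0 j), Real.sqrt_mul_self (hyb0 j), hyb]
            ring
        _ = 3⁻¹ * (Real.sqrt (yb j * B j v v) * Real.sqrt (yb j * B j e e)) := by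
            rw [Real.sqrt_mul (hyb0 j), Real.sqrt_mul (hyb0 j)]
    have h2 : ∑ j, Real.sqrt (yb j * B j v v) * Real.sqrt (yb j * B j e e)
        ≤ NN v * NN e := by
      have hsq := Finset.sum_sq_le_sum_mul_sum_of_sq_eq_mul Finset.univ
        (r := fun j => Real.sqrt (yb j * B j v v) * Real.sqrt (yb j * B j e e))
        (f := fun j => yb j * B j v v) (g := fun j => yb j * B j e e)
        (fun j _ => mul_nonneg (hyb0 j) (hnonneg j v))
        (fun j _ => mul_nonneg (hyb0 j) (hnonneg j e))
        (fun j _ => by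
          rw [mul_pow, Real.sq_sqrt (mul_nonneg (hyb0 j) (hnonneg j v)),
            Real.sq_sqrt (mul_nonneg (hyb0 j) (hnonneg j e))])
      have hsnn : 0 ≤ ∑ j, Real.sqrt (yb j * B j v v) * Real.sqrt (yb j * B j e e) :=
        Finset.sum_nonneg fun j _ => mul_nonneg (Real.sqrt_nonneg _) (Real.sqrt_nonneg _)
      have hrw : (∑ j, yb j * B j v v) = bb v v := (hbbapp v v).symm
      have hrw2 : (∑ j, yb j * B j e e) = bb e e := (hbbapp e e).symm
      rw [hrw, hrw2] at hsq
      calc (∑ j, Real.sqrt (yb j * B j v v) * Real.sqrt (yb j * B j e e))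
          = Real.sqrt ((∑ j, Real.sqrt (yb j * B j v v) * Real.sqrt (yb j * B j e e)) ^ 2) :=
            (Real.sqrt_sq hsnn).symm
        _ ≤ Real.sqrt (bb v v * bb e e) := Real.sqrt_le_sqrt hsq
        _ = NN v * NN e := by rw [Real.sqrt_mul (hbbnn v), hNN]
    have h3 : NN e ^ 2 ≤ 3⁻¹ * (NN v * NN e) := by
      rw [hNNsq]
      calc bb e e ≤ ∑ j, (3:ℝ)⁻¹ * (Real.sqrt (yb j * B j v v) * Real.sqrt (yb j * B j e e)) := h1
        _ = 3⁻¹ * ∑ j, Real.sqrt (yb j * B j v v) * Real.sqrt (yb j * B j e e) := by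
            rw [Finset.mul_sum]
        _ ≤ 3⁻¹ * (NN v * NN e) := by
            apply mul_le_mul_of_nonneg_left h2
            norm_num
    rcases eq_or_lt_of_le (hNNnn e) with h0 | h0
    · rw [← h0]
      positivity
    · nlinarith [hNNnn v]
  have hpow : ∀ n : ℕ, NN (((My y) ^ n) u) ≤ (3:ℝ)⁻¹ ^ n * NN u := by
    intro n
    induction n with
    | zero => simp
    | succ n ih =>
      rw [pow_succ', ContinuousLinearMap.mul_apply]
      calc NN (My y (((My y) ^ n) u)) ≤ 3⁻¹ * NN (((My y) ^ n) u) := hcontr _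
        _ ≤ 3⁻¹ * ((3:ℝ)⁻¹ ^ n * NN u) := by
            apply mul_le_mul_of_nonneg_left ih; norm_num
        _ = (3:ℝ)⁻¹ ^ (n+1) * NN u := by ring
  -- norm comparisons
  have haF : ∀ w : V, aForm B y w w = ∑ j, y j * B j w w := fun w => rfl
  have haFnn : ∀ w : V, 0 ≤ aForm B y w w := by
    intro w
    rw [haF]
    refine Finset.sum_nonneg fun j _ => mul_nonneg ?_ (hnonneg j w)
    have := (hy j).1; have := ha j; linarith
  have heNsq : ∀ w : V, eNorm B y w ^ 2 = aForm B y w w := fun w => Real.sq_sqrt (haFnn w)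
  have heNnn : ∀ w : V, 0 ≤ eNorm B y w := fun w => Real.sqrt_nonneg _
  have hcomp1 : ∀ w : V, eNorm B y w ≤ Real.sqrt (4/3) * NN w := by
    intro w
    have h1 : aForm B y w w ≤ 4/3 * bb w w := by
      rw [haF, hbbapp, Finset.mul_sum]
      refine Finset.sum_le_sum fun j _ => ?_
      have h2 := (hy j).2
      have := hnonneg j w
      rw [hyb]
      dsimp only
      nlinarith
    calc eNorm B y w = Real.sqrt (aForm B y w w) := rfl
      _ ≤ Real.sqrt (4/3 * bb w w) := Real.sqrt_le_sqrt h1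
      _ = Real.sqrt (4/3) * NN w := by rw [Real.sqrt_mul (by norm_num), hNN]
  have hcomp2 : NN u ≤ Real.sqrt (3/2) * eNorm B y u := by
    have h1 : bb u u ≤ 3/2 * aForm B y u u := by
      rw [haF, hbbapp, Finset.mul_sum]
      refine Finset.sum_le_sum fun j _ => ?_
      have h2 := (hy j).1
      have := hnonneg j u
      rw [hyb]
      dsimp only
      nlinarith
    calc NN u = Real.sqrt (bb u u) := rfl
      _ ≤ Real.sqrt (3/2 * aForm B y u u) := Real.sqrt_le_sqrt h1
      _ = Real.sqrt (3/2) * eNorm B y u := by rw [Real.sqrt_mul (by norm_num)]; rfl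
  have hcomp3 : eNorm B y u ≤ ‖f‖ := by
    have h1 : ‖u‖ ^ 2 ≤ aForm B y u u := by
      calc ‖u‖ ^ 2 = ⟪u, u⟫_ℝ := (real_inner_self_eq_norm_sq u).symm
        _ = ∑ j, B j u u := (hsum u u).symm
        _ ≤ ∑ j, y j * B j u u := Finset.sum_le_sum fun j _ =>
            le_mul_of_one_le_left (hnonneg j u) (by have := (hy j).1; have := ha j; linarith)
        _ = aForm B y u u := rfl
    have h2 : aForm B y u u = f u := hu u
    have h3 : f u ≤ ‖f‖ * ‖u‖ := by
      calc f u ≤ |f u| := le_abs_self _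
        _ = ‖f u‖ := rfl
        _ ≤ ‖f‖ * ‖u‖ := f.le_opNorm u
    have h4 : ‖u‖ ≤ eNorm B y u := by
      have hx : ‖u‖ = Real.sqrt (‖u‖ ^ 2) := (Real.sqrt_sq (norm_nonneg u)).symm
      rw [hx]
      exact Real.sqrt_le_sqrt h1
    rcases eq_or_lt_of_le (heNnn u) with h0 | h0
    · rw [← h0]; exact norm_nonneg f
    · have h5 : eNorm B y u ^ 2 ≤ ‖f‖ * eNorm B y u := by
        rw [heNsq, h2]
        calc f u ≤ ‖f‖ * ‖u‖ := h3
          _ ≤ ‖f‖ * eNorm B y u := mul_le_mul_of_nonneg_left h4 (norm_nonneg f)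
      nlinarith
  -- conclude
  have hkey : u - ∑ ν ∈ mIdx d k, mono y ν • c ν = ((My y) ^ (k+1)) u := by
    rw [← hc y]
    exact herr k
  rw [hkey]
  calc eNorm B y (((My y) ^ (k+1)) u) ≤ Real.sqrt (4/3) * NN (((My y) ^ (k+1)) u) := hcomp1 _
    _ ≤ Real.sqrt (4/3) * ((3:ℝ)⁻¹ ^ (k+1) * NN u) := by
        apply mul_le_mul_of_nonneg_left (hpow (k+1)) (Real.sqrt_nonneg _)
    _ ≤ Real.sqrt (4/3) * ((3:ℝ)⁻¹ ^ (k+1) * (Real.sqrt (3/2) * eNorm B y u)) := by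
        apply mul_le_mul_of_nonneg_left _ (Real.sqrt_nonneg _)
        apply mul_le_mul_of_nonneg_left hcomp2 (by positivity)
    _ ≤ Real.sqrt (4/3) * ((3:ℝ)⁻¹ ^ (k+1) * (Real.sqrt (3/2) * ‖f‖)) := by
        apply mul_le_mul_of_nonneg_left _ (Real.sqrt_nonneg _)
        apply mul_le_mul_of_nonneg_left _ (by positivity)
        apply mul_le_mul_of_nonneg_left hcomp3 (Real.sqrt_nonneg _)
    _ ≤ ‖f‖ / Real.sqrt 3 * (3 : ℝ) ^ (-(k : ℤ)) := by
        have hz : (3 : ℝ) ^ (-(k : ℤ)) = (3:ℝ)⁻¹ ^ k := by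
          rw [zpow_neg, zpow_natCast, inv_pow]
        rw [hz]
        have hs2 : Real.sqrt (4/3) * Real.sqrt (3/2) = Real.sqrt 2 := by
          rw [← Real.sqrt_mul (by norm_num)]
          norm_num
        have hs3 : (0:ℝ) < Real.sqrt 3 := Real.sqrt_pos.mpr (by norm_num)
        have h6 : Real.sqrt 2 * Real.sqrt 3 ≤ 3 := by
          nlinarith [Real.sq_sqrt (show (0:ℝ) ≤ 2 by norm_num),
            Real.sq_sqrt (show (0:ℝ) ≤ 3 by norm_num),
            Real.sqrt_nonneg 2, Real.sqrt_nonneg 3,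
            sq_nonneg (Real.sqrt 2 * Real.sqrt 3 - 3)]
        have hP : (0:ℝ) ≤ (3:ℝ)⁻¹ ^ k := by positivity
        have hLHS : Real.sqrt (4/3) * ((3:ℝ)⁻¹ ^ (k+1) * (Real.sqrt (3/2) * ‖f‖))
            = (Real.sqrt (4/3) * Real.sqrt (3/2)) * ((3:ℝ)⁻¹ ^ k * ‖f‖) / 3 := by
          rw [pow_succ]
          ring
        rw [hLHS, hs2, div_mul_eq_mul_div, div_le_div_iff₀ (by norm_num) hs3]
        have h7 := mul_le_mul_of_nonneg_right h6
          (mul_nonneg hP (norm_nonneg f))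
        nlinarith [h7]

/-- Lemma 3.1, energy norm estimate: polynomial approximation of total
degree `k` on the rectangle `R = Π_j [a_j, 2a_j]` with error `(C_f/√3)·3^{-k}` in `‖·‖_y`. -/
theorem statement5
    {V : Type*} [NormedAddCommGroup V] [InnerProductSpace ℝ V] [CompleteSpace V]
    {d : ℕ}
    (B : Fin d → V →L[ℝ] V →L[ℝ] ℝ)
    (hsymm : ∀ (j : Fin d) (v w : V), B j v w = B j w v)
    (hnonneg : ∀ (j : Fin d) (v : V), 0 ≤ B j v v)
    (hsum : ∀ v w : V, ∑ j, B j v w = ⟪v, w⟫_ℝ)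
    (f : V →L[ℝ] ℝ)
    (a : Fin d → ℝ) (ha : ∀ j, 1 ≤ a j) (k : ℕ) :
    ∃ c : (Fin d → ℕ) → V,
      ∀ y : Fin d → ℝ, (∀ j, a j ≤ y j ∧ y j ≤ 2 * a j) →
        ∀ u : V, IsWeakSol B f y u →
          eNorm B y (u - ∑ ν ∈ mIdx d k, mono y ν • c ν)
            ≤ ‖f‖ / Real.sqrt 3 * (3 : ℝ) ^ (-(k : ℤ)) := by
  exact statement5_main B hsymm hnonneg hsum f a ha k

end
end

section
/- Let R = [a_1,2a_1] × ⋯ × [a_d,2a_d] with a_j ≥ 1 for all j. Then for each integer k ≥ 0 there exist functions u_ν ∈ H^1_0(Ω), indexed by multi-indices ν ∈ ℕ^d with |ν| ≤ k, such that ‖u(y) − Σ_{|ν|≤k} u_ν y^ν‖_{H^1_0} ≤ (C_f/√6) · 3^{-k} for all y ∈ R, where y^ν := y_1^{ν_1}⋯y_d^{ν_d}. -/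
open scoped BigOperators ENNReal InnerProductSpace
open Filter

noncomputable section

variable {V : Type*} [NormedAddCommGroup V] [InnerProductSpace ℝ V] [CompleteSpace V]

namespace S6Aux

variable {d : ℕ} {V : Type*} [AddCommGroup V] [Module ℝ V]

lemma mIdx_subset {n m : ℕ} (h : n ≤ m) : mIdx d n ⊆ mIdx d m := by
  intro ν hν
  simp only [mIdx, Finset.mem_filter, Fintype.mem_piFinset, Finset.mem_range] at *
  exact ⟨fun j => lt_of_lt_of_le (hν.1 j) (by omega), hν.2.trans h⟩

lemma zero_mem_mIdx {n : ℕ} : (0 : Fin d → ℕ) ∈ mIdx d n := by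
  simp [mIdx, Fintype.mem_piFinset]

lemma mono_zero (y : Fin d → ℝ) : mono y 0 = 1 := by simp [mono]

def HasRep (n : ℕ) (g : (Fin d → ℝ) → V) : Prop :=
  ∃ c : (Fin d → ℕ) → V, ∀ y, g y = ∑ ν ∈ mIdx d n, mono y ν • c ν

lemma hasRep_const (n : ℕ) (v : V) : HasRep (d := d) n (fun _ => v) := by
  classical
  refine ⟨fun ν => if ν = 0 then v else 0, fun y => ?_⟩
  have : ∀ ν : Fin d → ℕ, mono y ν • (if ν = 0 then v else 0)
      = if ν = 0 then mono y ν • v else 0 := by intro ν; split <;> simp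
  simp_rw [this]
  rw [Finset.sum_ite_eq' (mIdx d n) 0 (fun ν => mono y ν • v)]
  simp [zero_mem_mIdx, mono_zero]

lemma HasRep.mono_le {n m : ℕ} (h : n ≤ m) {g : (Fin d → ℝ) → V} (hg : HasRep n g) :
    HasRep m g := by
  classical
  obtain ⟨c, hc⟩ := hg
  refine ⟨fun ν => if ν ∈ mIdx d n then c ν else 0, fun y => ?_⟩
  rw [hc y]
  have h1 : ∑ ν ∈ mIdx d n, mono y ν • c ν
      = ∑ ν ∈ mIdx d n, mono y ν • (if ν ∈ mIdx d n then c ν else 0) :=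
    Finset.sum_congr rfl fun ν hν => by rw [if_pos hν]
  rw [h1]
  exact Finset.sum_subset (mIdx_subset h) (fun ν _ hν => by rw [if_neg hν, smul_zero])

lemma HasRep.add {n : ℕ} {g h : (Fin d → ℝ) → V} (hg : HasRep n g) (hh : HasRep n h) :
    HasRep n (fun y => g y + h y) := by
  obtain ⟨c, hc⟩ := hg; obtain ⟨c', hc'⟩ := hh
  exact ⟨fun ν => c ν + c' ν, fun y => by
    simp [hc y, hc' y, smul_add, Finset.sum_add_distrib]⟩

lemma HasRep.sub {n : ℕ} {g h : (Fin d → ℝ) → V} (hg : HasRep n g) (hh : HasRep n h) :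
    HasRep n (fun y => g y - h y) := by
  obtain ⟨c, hc⟩ := hg; obtain ⟨c', hc'⟩ := hh
  exact ⟨fun ν => c ν - c' ν, fun y => by
    simp [hc y, hc' y, smul_sub, Finset.sum_sub_distrib]⟩

lemma HasRep.map {W : Type*} [AddCommGroup W] [Module ℝ W] {n : ℕ}
    {g : (Fin d → ℝ) → V} (T : V →ₗ[ℝ] W) (hg : HasRep n g) :
    HasRep n (fun y => T (g y)) := by
  obtain ⟨c, hc⟩ := hg
  exact ⟨fun ν => T (c ν), fun y => by simp [hc y, map_sum, map_smul]⟩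

lemma HasRep.smul {n : ℕ} (r : ℝ) {g : (Fin d → ℝ) → V} (hg : HasRep n g) :
    HasRep n (fun y => r • g y) := by
  obtain ⟨c, hc⟩ := hg
  exact ⟨fun ν => r • c ν, fun y => by
    simp [hc y, Finset.smul_sum, smul_comm r]⟩

lemma hasRep_finsetSum {ι : Type*} {n : ℕ} (s : Finset ι) (g : ι → (Fin d → ℝ) → V)
    (h : ∀ i ∈ s, HasRep n (g i)) : HasRep n (fun y => ∑ i ∈ s, g i y) := by
  classical
  induction s using Finset.induction with
  | empty => simpa using hasRep_const (d := d) n (0 : V)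
  | @insert x s hx ih =>
    simp only [Finset.sum_insert hx]
    exact (h x (Finset.mem_insert_self x s)).add
      (ih fun i hi => h i (Finset.mem_insert_of_mem hi))

lemma add_single_mem_mIdx {n : ℕ} {ν : Fin d → ℕ} (j : Fin d) (hν : ν ∈ mIdx d n) :
    ν + Pi.single j 1 ∈ mIdx d (n+1) := by
  classical
  simp only [mIdx, Finset.mem_filter, Fintype.mem_piFinset, Finset.mem_range] at *
  constructor
  · intro i
    have h1 := hν.1 i
    simp only [Pi.add_apply, Pi.single_apply]
    split <;> omega
  · have h2 : ∑ i, (ν + Pi.single j 1 : Fin d → ℕ) i = (∑ i, ν i) + 1 := by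
      simp only [Pi.add_apply, Finset.sum_add_distrib]
      simp [Finset.sum_pi_single']
    omega

lemma mono_add_single (y : Fin d → ℝ) (ν : Fin d → ℕ) (j : Fin d) :
    mono y (ν + Pi.single j 1) = y j * mono y ν := by
  classical
  unfold mono
  simp only [Pi.add_apply, pow_add]
  rw [Finset.prod_mul_distrib]
  have : ∀ i : Fin d, y i ^ (Pi.single j (1:ℕ) i) = if i = j then y j else 1 := by
    intro i
    simp only [Pi.single_apply]
    split
    · rename_i h; subst h; simp
    · simp
  simp_rw [this]
  rw [Finset.prod_ite_eq' Finset.univ j (fun _ => y j)]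
  simp [mul_comm]

lemma HasRep.mul_coord {n : ℕ} (j : Fin d) {g : (Fin d → ℝ) → V} (hg : HasRep n g) :
    HasRep (n+1) (fun y => y j • g y) := by
  classical
  obtain ⟨c, hc⟩ := hg
  refine ⟨fun μ => ∑ ν ∈ mIdx d n, if ν + Pi.single j 1 = μ then c ν else 0, fun y => ?_⟩
  show y j • g y = _
  rw [hc y, Finset.smul_sum]
  have hrw : ∀ μ : Fin d → ℕ, mono y μ •
      (∑ ν ∈ mIdx d n, if ν + Pi.single j 1 = μ then c ν else 0)
      = ∑ ν ∈ mIdx d n, if ν + Pi.single j 1 = μ then mono y μ • c ν else 0 := by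
    intro μ
    rw [Finset.smul_sum]
    exact Finset.sum_congr rfl fun ν _ => by split <;> simp
  simp_rw [hrw]
  rw [Finset.sum_comm]
  refine Finset.sum_congr rfl fun ν hν => ?_
  rw [Finset.sum_ite_eq (mIdx d (n+1)) (ν + Pi.single j 1) (fun μ => mono y μ • c ν)]
  rw [if_pos (add_single_mem_mIdx j hν), mono_add_single, smul_smul]

end S6Aux

lemma S6Aux.bilin_cs {V : Type*} [NormedAddCommGroup V] [InnerProductSpace ℝ V]
    (P : V →L[ℝ] V →L[ℝ] ℝ) (hs : ∀ v w : V, P v w = P w v)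
    (hn : ∀ v : V, 0 ≤ P v v) (v w : V) : |P v w| ≤ Real.sqrt (P v v * P w w) := by
  have hq : ∀ t : ℝ, 0 ≤ P w w * (t * t) + (2 * P v w) * t + P v v := by
    intro t
    have h := hn (v + t • w)
    have hexp : P (v + t • w) (v + t • w)
        = P v v + t * P v w + t * P w v + t * (t * P w w) := by
      simp only [map_add, map_smul, ContinuousLinearMap.add_apply,
        ContinuousLinearMap.smul_apply, smul_eq_mul]
      ring
    rw [hexp] at h
    have hsym := hs v w
    rw [← hsym] at h
    nlinarith [h]
  have hd := discrim_le_zero hq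
  rw [discrim] at hd
  have h2 : P v w ^ 2 ≤ P v v * P w w := by nlinarith
  calc |P v w| = Real.sqrt ((P v w) ^ 2) := (Real.sqrt_sq_eq_abs _).symm
    _ ≤ _ := Real.sqrt_le_sqrt h2

/-- Lemma 3.1, `H^1_0` estimate: polynomial approximation of total
degree `k` on the rectangle `R = Π_j [a_j, 2a_j]` with error `(C_f/√6)·3^{-k}` in `H^1_0`. -/
theorem statement6
    {V : Type*} [NormedAddCommGroup V] [InnerProductSpace ℝ V] [CompleteSpace V]
    {d : ℕ}
    (B : Fin d → V →L[ℝ] V →L[ℝ] ℝ)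
    (hsymm : ∀ (j : Fin d) (v w : V), B j v w = B j w v)
    (hnonneg : ∀ (j : Fin d) (v : V), 0 ≤ B j v v)
    (hsum : ∀ v w : V, ∑ j, B j v w = ⟪v, w⟫_ℝ)
    (f : V →L[ℝ] ℝ)
    (a : Fin d → ℝ) (ha : ∀ j, 1 ≤ a j) (k : ℕ) :
    ∃ c : (Fin d → ℕ) → V,
      ∀ y : Fin d → ℝ, (∀ j, a j ≤ y j ∧ y j ≤ 2 * a j) →
        ∀ u : V, IsWeakSol B f y u →
          ‖u - ∑ ν ∈ mIdx d k, mono y ν • c ν‖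
            ≤ ‖f‖ / Real.sqrt 6 * (3 : ℝ) ^ (-(k : ℤ)) := by
  classical
  set yb : Fin d → ℝ := fun j => 3/2 * a j with hyb_def
  have hyb_ge : ∀ j, (3/2 : ℝ) ≤ yb j := fun j => by
    have := ha j; simp only [hyb_def]; linarith
  have hyb_pos : ∀ j, (0:ℝ) ≤ yb j := fun j => by linarith [hyb_ge j]
  set bB : V →L[ℝ] V →L[ℝ] ℝ := ∑ j, yb j • B j with hbB_def
  have hbB_app : ∀ v w : V, bB v w = ∑ j, yb j * B j v w := by
    intro v w
    simp [hbB_def, ContinuousLinearMap.sum_apply, ContinuousLinearMap.smul_apply]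
  have hcoer_ineq : ∀ v : V, 3/2 * (‖v‖ * ‖v‖) ≤ bB v v := by
    intro v
    rw [hbB_app]
    have h1 : ∑ j, (3/2 : ℝ) * B j v v ≤ ∑ j, yb j * B j v v :=
      Finset.sum_le_sum fun j _ => mul_le_mul_of_nonneg_right (hyb_ge j) (hnonneg j v)
    have h2 : ∑ j, (3/2:ℝ) * B j v v = 3/2 * (‖v‖*‖v‖) := by
      rw [← Finset.mul_sum, hsum v v, real_inner_self_eq_norm_mul_norm]
    linarith
  have hbB_nonneg : ∀ v : V, 0 ≤ bB v v := fun v =>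
    le_trans (by positivity) (hcoer_ineq v)
  have coercive : IsCoercive bB :=
    ⟨3/2, by norm_num, fun v => by linarith [hcoer_ineq v]⟩
  set G := coercive.continuousLinearEquivOfBilin with hG_def
  have hG : ∀ v w : V, ⟪G v, w⟫_ℝ = bB v w := fun v w =>
    coercive.continuousLinearEquivOfBilin_apply v w
  set A : Fin d → V →L[ℝ] V :=
    fun j => InnerProductSpace.continuousLinearMapOfBilin (B j) with hA_def
  have hA : ∀ j (v w : V), ⟪A j v, w⟫_ℝ = B j v w := fun j v w =>
    InnerProductSpace.continuousLinearMapOfBilin_apply (B j) v w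
  set T : Fin d → V →L[ℝ] V := fun j => (G.symm : V →L[ℝ] V).comp (A j) with hT_def
  have hT : ∀ j (v w : V), bB (T j v) w = B j v w := by
    intro j v w
    have h1 : G (T j v) = A j v := by
      simp [hT_def]
    rw [← hG, h1, hA]
  set Ey : (Fin d → ℝ) → V →L[ℝ] V := fun y => ∑ j, (y j - yb j) • T j with hEy_def
  have hEy_app : ∀ y (v : V), Ey y v = ∑ j, (y j - yb j) • T j v := by
    intro y v
    simp [hEy_def, ContinuousLinearMap.sum_apply]
  have hEy : ∀ y (v w : V), bB (Ey y v) w = ∑ j, (y j - yb j) * B j v w := by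
    intro y v w
    rw [hEy_app, map_sum, ContinuousLinearMap.sum_apply]
    refine Finset.sum_congr rfl fun j _ => ?_
    rw [map_smul, ContinuousLinearMap.smul_apply, smul_eq_mul, hT]
  set en : V → ℝ := fun v => Real.sqrt (bB v v) with hen_def
  have hen_nonneg : ∀ v : V, 0 ≤ en v := fun v => Real.sqrt_nonneg _
  have hen_sq : ∀ v : V, en v * en v = bB v v := fun v =>
    Real.mul_self_sqrt (hbB_nonneg v)
  have hen_neg : ∀ x : V, en (-x) = en x := by
    intro x
    simp only [hen_def]
    congr 1
    rw [map_neg]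
    simp
  have hnorm_le : ∀ v : V, ‖v‖ ≤ Real.sqrt (2/3) * en v := by
    intro v
    have h1 : ‖v‖ * ‖v‖ ≤ (2/3) * bB v v := by linarith [hcoer_ineq v]
    have h2 : ‖v‖ = Real.sqrt (‖v‖ * ‖v‖) := (Real.sqrt_mul_self (norm_nonneg v)).symm
    rw [h2]
    simp only [hen_def]
    calc Real.sqrt (‖v‖*‖v‖) ≤ Real.sqrt ((2/3) * bB v v) := Real.sqrt_le_sqrt h1
      _ = Real.sqrt (2/3) * Real.sqrt (bB v v) := Real.sqrt_mul (by norm_num) _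
  clear_value yb bB G A T Ey en
  have key : ∀ y : Fin d → ℝ, (∀ j, a j ≤ y j ∧ y j ≤ 2 * a j) →
      ∀ v w : V, |bB (Ey y v) w| ≤ 1/3 * (en v * en w) := by
    intro y hy v w
    rw [hEy]
    have habs : ∀ j : Fin d, |(y j - yb j) * B j v w|
        ≤ 1/3 * (Real.sqrt (yb j * B j v v) * Real.sqrt (yb j * B j w w)) := by
      intro j
      rw [abs_mul]
      have hc : |y j - yb j| ≤ yb j / 3 := by
        have h1 := (hy j).1; have h2 := (hy j).2; have h3 := ha j
        rw [abs_le]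
        constructor <;> (simp only [hyb_def]; linarith)
      have hcs := S6Aux.bilin_cs (B j) (hsymm j) (hnonneg j) v w
      have h5 : Real.sqrt (yb j * B j v v) * Real.sqrt (yb j * B j w w)
          = yb j * Real.sqrt (B j v v * B j w w) := by
        rw [Real.sqrt_mul (hyb_pos j), Real.sqrt_mul (hyb_pos j),
            Real.sqrt_mul (hnonneg j v)]
        have hms : Real.sqrt (yb j) * Real.sqrt (yb j) = yb j :=
          Real.mul_self_sqrt (hyb_pos j)
        linear_combination (Real.sqrt (B j v v) * Real.sqrt (B j w w)) * hms
      rw [h5]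
      calc |y j - yb j| * |B j v w|
          ≤ (yb j / 3) * Real.sqrt (B j v v * B j w w) :=
            mul_le_mul hc hcs (abs_nonneg _) (by linarith [hyb_pos j])
        _ = 1/3 * (yb j * Real.sqrt (B j v v * B j w w)) := by ring
    calc |∑ j, (y j - yb j) * B j v w| ≤ ∑ j, |(y j - yb j) * B j v w| :=
          Finset.abs_sum_le_sum_abs _ _
      _ ≤ ∑ j, 1/3 * (Real.sqrt (yb j * B j v v) * Real.sqrt (yb j * B j w w)) :=
          Finset.sum_le_sum fun j _ => habs j
      _ = 1/3 * ∑ j, Real.sqrt (yb j * B j v v) * Real.sqrt (yb j * B j w w) := by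
          rw [Finset.mul_sum]
      _ ≤ 1/3 * (Real.sqrt (∑ j, yb j * B j v v) * Real.sqrt (∑ j, yb j * B j w w)) := by
          have hcs2 := Real.sum_sqrt_mul_sqrt_le (Finset.univ)
            (f := fun j => yb j * B j v v) (g := fun j => yb j * B j w w)
            (fun j => mul_nonneg (hyb_pos j) (hnonneg j v))
            (fun j => mul_nonneg (hyb_pos j) (hnonneg j w))
          linarith
      _ = 1/3 * (en v * en w) := by
          simp only [hen_def, hbB_app]
  have contr : ∀ y : Fin d → ℝ, (∀ j, a j ≤ y j ∧ y j ≤ 2*a j) →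
      ∀ v : V, en (Ey y v) ≤ 1/3 * en v := by
    intro y hy v
    have h1 : en (Ey y v) * en (Ey y v) ≤ 1/3 * (en v * en (Ey y v)) := by
      rw [hen_sq]
      exact le_trans (le_abs_self _) (key y hy v (Ey y v))
    rcases eq_or_lt_of_le (hen_nonneg (Ey y v)) with h0 | h0
    · rw [← h0]; linarith [hen_nonneg v]
    · have h2 : en (Ey y v) * en (Ey y v) ≤ (1/3 * en v) * en (Ey y v) := by linarith
      exact le_of_mul_le_mul_right h2 h0
  set Rf := (InnerProductSpace.toDual ℝ V).symm f with hRf_def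
  have hRf : ∀ w : V, ⟪Rf, w⟫_ℝ = f w := fun w => InnerProductSpace.toDual_symm_apply
  set ub := G.symm Rf with hub_def
  have hub : ∀ w : V, bB ub w = f w := fun w => by
    rw [← hG, hub_def, G.apply_symm_apply, hRf]
  clear_value Rf ub
  set Uc : ℕ → (Fin d → ℝ) → V := fun n => Nat.rec (motive := fun _ => (Fin d → ℝ) → V)
    (fun _ => ub) (fun _ U y => ∑ j, (yb j - y j) • T j (U y)) n with hUc_def
  have hUc0 : ∀ y, Uc 0 y = ub := fun y => rfl
  have hUcS : ∀ n y, Uc (n+1) y = ∑ j, (yb j - y j) • T j (Uc n y) := fun n y => rfl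
  clear_value Uc
  have hUcrep : ∀ n, S6Aux.HasRep n (Uc n) := by
    intro n
    induction n with
    | zero =>
      have h0 : Uc 0 = fun _ => ub := funext hUc0
      rw [h0]
      exact S6Aux.hasRep_const 0 ub
    | succ n ih =>
      have heq : Uc (n+1) = fun y => ∑ j, (yb j • T j (Uc n y) - y j • T j (Uc n y)) := by
        funext y
        rw [hUcS]
        exact Finset.sum_congr rfl fun j _ => sub_smul _ _ _
      rw [heq]
      refine S6Aux.hasRep_finsetSum Finset.univ
        (fun j => fun y => yb j • T j (Uc n y) - y j • T j (Uc n y)) fun j _ => ?_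
      have hmap : S6Aux.HasRep n (fun y => (T j : V →ₗ[ℝ] V) (Uc n y)) :=
        ih.map (T j : V →ₗ[ℝ] V)
      exact ((hmap.smul (yb j)).mono_le (Nat.le_succ n)).sub (hmap.mul_coord j)
  obtain ⟨c, hc⟩ := S6Aux.hasRep_finsetSum (n := k) (Finset.range (k+1)) (fun m => Uc m)
    (fun m hm => (hUcrep m).mono_le (by
      have := Finset.mem_range.mp hm; omega))
  refine ⟨c, ?_⟩
  intro y hy u hu
  rw [← hc y]
  -- solution identity
  have hadd : u + Ey y u = ub := by
    have h1 : ∀ w : V, bB (u + Ey y u) w = bB ub w := by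
      intro w
      rw [map_add, ContinuousLinearMap.add_apply, hEy, hub, hbB_app]
      have h2 : ∑ j, yb j * B j u w + ∑ j, (y j - yb j) * B j u w
          = ∑ j, y j * B j u w := by
        rw [← Finset.sum_add_distrib]
        exact Finset.sum_congr rfl fun j _ => by ring
      rw [h2]
      simpa [aForm] using hu w
    have h3 : G (u + Ey y u) = G ub := ext_inner_right ℝ fun w => by rw [hG, hG, h1]
    exact G.injective h3
  have hsub : u - ub = (-(Ey y)) u := by
    rw [ContinuousLinearMap.neg_apply, ← hadd]
    abel
  have hUcpow : ∀ n, Uc n y = ((-(Ey y))^n) ub := by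
    intro n; induction n with
    | zero => simp [hUc0]
    | succ n ih =>
      rw [hUcS, pow_succ', ContinuousLinearMap.mul_apply, ← ih]
      have h4 : (-(Ey y)) (Uc n y) = ∑ j, (yb j - y j) • T j (Uc n y) := by
        rw [ContinuousLinearMap.neg_apply, hEy_app, ← Finset.sum_neg_distrib]
        exact Finset.sum_congr rfl fun j _ => by rw [← neg_smul, neg_sub]
      rw [h4]
  have htail : ∀ n, u - ∑ m ∈ Finset.range n, Uc m y = ((-(Ey y))^n) u := by
    intro n; induction n with
    | zero => simp
    | succ n ih =>
      rw [Finset.sum_range_succ]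
      have h5 : u - (∑ m ∈ Finset.range n, Uc m y + Uc n y)
          = (u - ∑ m ∈ Finset.range n, Uc m y) - Uc n y := by abel
      rw [h5, ih, hUcpow n, ← map_sub, hsub, ← ContinuousLinearMap.mul_apply, ← pow_succ]
  have hu_en : en u ≤ 3/2 * (Real.sqrt (2/3) * ‖f‖) := by
    have h1 : bB u u + bB (Ey y u) u = f u := by
      rw [hEy, hbB_app]
      have h2 : ∑ j, yb j * B j u u + ∑ j, (y j - yb j) * B j u u
          = ∑ j, y j * B j u u := by
        rw [← Finset.sum_add_distrib]
        exact Finset.sum_congr rfl fun j _ => by ring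
      rw [h2]
      simpa [aForm] using hu u
    have hk := key y hy u u
    have h4 : f u ≤ ‖f‖ * ‖u‖ := by
      refine le_trans (le_abs_self _) ?_
      rw [← Real.norm_eq_abs]
      exact f.le_opNorm u
    have h5 : en u * en u ≤ ‖f‖ * ‖u‖ + 1/3 * (en u * en u) := by
      have hes := hen_sq u
      have hna := neg_abs_le (bB (Ey y u) u)
      linarith
    have h6 := hnorm_le u
    rcases eq_or_lt_of_le (hen_nonneg u) with h0 | h0
    · rw [← h0]; positivity
    · have hFu : ‖f‖ * ‖u‖ ≤ ‖f‖ * (Real.sqrt (2/3) * en u) :=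
        mul_le_mul_of_nonneg_left h6 (norm_nonneg f)
      have h7 : en u * en u ≤ (3/2 * (Real.sqrt (2/3) * ‖f‖)) * en u := by linarith
      exact le_of_mul_le_mul_right h7 h0
  have hiter : ∀ n (v : V), en (((-(Ey y))^n) v) ≤ (1/3)^n * en v := by
    intro n v; induction n with
    | zero => simp
    | succ n ih =>
      rw [pow_succ', ContinuousLinearMap.mul_apply]
      have h1 : en ((-(Ey y)) (((-(Ey y))^n) v)) = en (Ey y (((-(Ey y))^n) v)) := by
        rw [ContinuousLinearMap.neg_apply, ← hen_neg, neg_neg]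
      calc en ((-(Ey y)) (((-(Ey y))^n) v)) = en (Ey y (((-(Ey y))^n) v)) := h1
        _ ≤ 1/3 * en (((-(Ey y))^n) v) := contr y hy _
        _ ≤ 1/3 * ((1/3)^n * en v) := by
            have := ih
            linarith
        _ = (1/3)^(n+1) * en v := by ring
  have hz : (3:ℝ)^(-(k:ℤ)) = (1/3:ℝ)^k := by
    rw [zpow_neg, zpow_natCast, one_div, inv_pow]
  have hs6 : Real.sqrt 6 ≤ 3 := by
    rw [show (3:ℝ) = Real.sqrt 9 by
      rw [show (9:ℝ) = 3^2 by norm_num, Real.sqrt_sq (by norm_num : (0:ℝ) ≤ 3)]]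
    exact Real.sqrt_le_sqrt (by norm_num)
  have hs6pos : 0 < Real.sqrt 6 := Real.sqrt_pos.mpr (by norm_num)
  calc ‖u - ∑ m ∈ Finset.range (k+1), Uc m y‖
      = ‖((-(Ey y))^(k+1)) u‖ := by rw [htail (k+1)]
    _ ≤ Real.sqrt (2/3) * en (((-(Ey y))^(k+1)) u) := hnorm_le _
    _ ≤ Real.sqrt (2/3) * ((1/3)^(k+1) * en u) :=
        mul_le_mul_of_nonneg_left (hiter (k+1) u) (Real.sqrt_nonneg _)
    _ ≤ Real.sqrt (2/3) * ((1/3)^(k+1) * (3/2 * (Real.sqrt (2/3) * ‖f‖))) := by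
        have h7 : (0:ℝ) ≤ (1/3:ℝ)^(k+1) := by positivity
        have h8 := mul_le_mul_of_nonneg_left hu_en h7
        exact mul_le_mul_of_nonneg_left h8 (Real.sqrt_nonneg _)
    _ = (Real.sqrt (2/3) * Real.sqrt (2/3)) * ((3/2) * (1/3)^(k+1) * ‖f‖) := by ring
    _ = (1/3)^(k+1) * ‖f‖ := by
        rw [Real.mul_self_sqrt (by norm_num : (0:ℝ) ≤ 2/3)]
        ring
    _ ≤ ‖f‖ / Real.sqrt 6 * (3:ℝ)^(-(k:ℤ)) := by
        rw [hz, pow_succ]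
        have h9 : ‖f‖ / 3 ≤ ‖f‖ / Real.sqrt 6 :=
          div_le_div_of_nonneg_left (norm_nonneg f) hs6pos hs6
        have h10 : (0:ℝ) ≤ (1/3:ℝ)^k := by positivity
        calc (1/3:ℝ)^k * (1/3) * ‖f‖ = (‖f‖/3) * (1/3)^k := by ring
          _ ≤ (‖f‖ / Real.sqrt 6) * (1/3)^k := mul_le_mul_of_nonneg_right h9 h10


end
end

section
/- Let S ⊂ {1,…,d} and let R = Π_{j∈S^c} [a_j,2a_j] with a_j ≥ 1 for all j ∈ S^c. Then for each integer k ≥ 0 there exist functions u_ν ∈ V_S, indexed by multi-indices ν over S^c with |ν| ≤ k, such that for all y_{S^c} ∈ R: ‖u_S(y_{S^c}) − Σ_{|ν|≤k} u_ν y_{S^c}^ν‖_{y_{S^c}} ≤ (C_f/√3) · 3^{-k} and ‖u_S(y_{S^c}) − Σ_{|ν|≤k} u_ν y_{S^c}^ν‖_{H^1_0} ≤ (C_f/√6) · 3^{-k}, where ‖v‖_{y_{S^c}}² := Σ_{j∈S^c} y_j ∫_{Ω_j} |∇v|² dx. -/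
open scoped BigOperators ENNReal InnerProductSpace
open Filter

noncomputable section

variable {V : Type*} [NormedAddCommGroup V] [InnerProductSpace ℝ V] [CompleteSpace V]

section AuxPoly

variable {d : ℕ}

/-- Multi-indices of degree at most `k` supported outside `S`. -/
def FIdx (S : Finset (Fin d)) (k : ℕ) : Finset (Fin d → ℕ) :=
  (mIdx d k).filter fun ν => ∀ j ∈ S, ν j = 0

lemma mem_FIdx {S : Finset (Fin d)} {k : ℕ} {ν : Fin d → ℕ} :
    ν ∈ FIdx S k ↔ (∑ j, ν j ≤ k ∧ ∀ j ∈ S, ν j = 0) := by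
  constructor
  · intro h
    rw [FIdx, Finset.mem_filter, mIdx, Finset.mem_filter] at h
    exact ⟨h.1.2, h.2⟩
  · rintro ⟨h1, h2⟩
    rw [FIdx, Finset.mem_filter, mIdx, Finset.mem_filter]
    refine ⟨⟨?_, h1⟩, h2⟩
    rw [Fintype.mem_piFinset]
    intro i
    rw [Finset.mem_range]
    exact lt_of_le_of_lt
      (le_trans (Finset.single_le_sum (f := ν) (fun _ _ => Nat.zero_le _) (Finset.mem_univ i)) h1)
      (Nat.lt_succ_self k)

lemma FIdx_mono {S : Finset (Fin d)} {k k' : ℕ} (h : k ≤ k') : FIdx S k ⊆ FIdx S k' := by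
  intro ν hν
  rw [mem_FIdx] at *
  exact ⟨le_trans hν.1 h, hν.2⟩

variable {W : Type*} [AddCommGroup W] [Module ℝ W]

/-- `P` is a polynomial map of degree at most `k` in the variables outside `S`,
with coefficients in `W`. -/
def PolyIn (S : Finset (Fin d)) (k : ℕ) (P : (Fin d → ℝ) → W) : Prop :=
  ∃ c : (Fin d → ℕ) → W, ∀ y, P y = ∑ ν ∈ FIdx S k, mono y ν • c ν

lemma polyIn_const (S : Finset (Fin d)) (k : ℕ) (w : W) :
    PolyIn S k (fun _ => w) := by
  classical
  refine ⟨fun ν => if ν = 0 then w else 0, fun y => ?_⟩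
  have h0 : (0 : Fin d → ℕ) ∈ FIdx S k := mem_FIdx.2 ⟨by simp, by simp⟩
  rw [Finset.sum_eq_single (0 : Fin d → ℕ)]
  · simp [mono]
  · intro b _ hb; simp [hb]
  · intro h; exact absurd h0 h

lemma polyIn_add {S : Finset (Fin d)} {k : ℕ} {P Q : (Fin d → ℝ) → W}
    (hP : PolyIn S k P) (hQ : PolyIn S k Q) : PolyIn S k (fun y => P y + Q y) := by
  obtain ⟨c, hc⟩ := hP
  obtain ⟨e, he⟩ := hQ
  exact ⟨fun ν => c ν + e ν, fun y => by
    simp only [hc y, he y, smul_add, Finset.sum_add_distrib]⟩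

lemma polyIn_smul {S : Finset (Fin d)} {k : ℕ} {P : (Fin d → ℝ) → W} (r : ℝ)
    (hP : PolyIn S k P) : PolyIn S k (fun y => r • P y) := by
  obtain ⟨c, hc⟩ := hP
  refine ⟨fun ν => r • c ν, fun y => ?_⟩
  dsimp only
  rw [hc y, Finset.smul_sum]
  exact Finset.sum_congr rfl fun ν _ => smul_comm r (mono y ν) (c ν)

lemma polyIn_sub {S : Finset (Fin d)} {k : ℕ} {P Q : (Fin d → ℝ) → W}
    (hP : PolyIn S k P) (hQ : PolyIn S k Q) : PolyIn S k (fun y => P y - Q y) := by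
  have := polyIn_add hP (polyIn_smul (-1 : ℝ) hQ)
  simpa [sub_eq_add_neg] using this

lemma polyIn_map {W' : Type*} [AddCommGroup W'] [Module ℝ W']
    {S : Finset (Fin d)} {k : ℕ} {P : (Fin d → ℝ) → W} (L : W → W')
    (hadd : ∀ a b, L (a + b) = L a + L b) (hsmul : ∀ (r : ℝ) a, L (r • a) = r • L a)
    (hP : PolyIn S k P) : PolyIn S k (fun y => L (P y)) := by
  obtain ⟨c, hc⟩ := hP
  have h0 : L 0 = 0 := by simpa using hsmul 0 0
  have hsumL : ∀ (s : Finset (Fin d → ℕ)) (g : (Fin d → ℕ) → W),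
      L (∑ ν ∈ s, g ν) = ∑ ν ∈ s, L (g ν) := by
    intro s g
    induction s using Finset.cons_induction with
    | empty => simpa using h0
    | cons a s ha ih => rw [Finset.sum_cons, Finset.sum_cons, hadd, ih]
  refine ⟨fun ν => L (c ν), fun y => ?_⟩
  dsimp only
  rw [hc y, hsumL]
  exact Finset.sum_congr rfl fun ν _ => hsmul _ _

lemma polyIn_mono {S : Finset (Fin d)} {k k' : ℕ} {P : (Fin d → ℝ) → W} (h : k ≤ k')
    (hP : PolyIn S k P) : PolyIn S k' P := by
  classical
  obtain ⟨c, hc⟩ := hP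
  refine ⟨fun ν => if ν ∈ FIdx S k then c ν else 0, fun y => ?_⟩
  dsimp only
  rw [hc y, ← Finset.sum_subset (FIdx_mono h) (fun ν _ hν => by rw [if_neg hν, smul_zero])]
  exact Finset.sum_congr rfl fun ν hν => by rw [if_pos hν]

lemma polyIn_finset_sum {ι : Type*} (s : Finset ι) {S : Finset (Fin d)} {k : ℕ}
    {P : ι → (Fin d → ℝ) → W} (h : ∀ i ∈ s, PolyIn S k (P i)) :
    PolyIn S k (fun y => ∑ i ∈ s, P i y) := by
  classical
  induction s using Finset.cons_induction with
  | empty => simpa using polyIn_const S k (0 : W)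
  | cons a s ha ih =>
      simp only [Finset.sum_cons]
      exact polyIn_add (h a (Finset.mem_cons_self a s))
        (ih fun i hi => h i (Finset.mem_cons_of_mem hi))

lemma polyIn_factor {S : Finset (Fin d)} {k : ℕ} {P : (Fin d → ℝ) → W} {j : Fin d}
    (hj : j ∉ S) (hP : PolyIn S k P) : PolyIn S (k + 1) (fun y => y j • P y) := by
  classical
  obtain ⟨c, hc⟩ := hP
  set δ : Fin d → ℕ := Pi.single j 1 with hδ
  have hsub : ∀ ν : Fin d → ℕ, (ν + δ) - δ = ν := by
    intro ν; funext i; simp [Nat.add_sub_cancel]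
  have hmono : ∀ (y : Fin d → ℝ) (ν : Fin d → ℕ), mono y (ν + δ) = y j * mono y ν := by
    intro y ν
    simp only [mono, Pi.add_apply, pow_add]
    rw [Finset.prod_mul_distrib]
    have : ∏ i, y i ^ δ i = y j := by
      rw [Finset.prod_eq_single j (fun i _ hij => by simp [hδ, Pi.single_eq_of_ne hij])
        (fun h => absurd (Finset.mem_univ j) h)]
      simp [hδ]
    rw [this, mul_comm]
  have hinj : ∀ a ∈ FIdx S k, ∀ b ∈ FIdx S k, a + δ = b + δ → a = b := by
    intro a _ b _ h
    have := congrArg (fun ν => ν - δ) h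
    simpa [hsub] using this
  have himg : (FIdx S k).image (· + δ) ⊆ FIdx S (k + 1) := by
    intro μ hμ
    obtain ⟨ν, hν, rfl⟩ := Finset.mem_image.1 hμ
    rw [mem_FIdx] at hν ⊢
    constructor
    · have : ∑ i, (ν + δ) i = (∑ i, ν i) + ∑ i, δ i := by
        simp [Finset.sum_add_distrib]
      rw [this, hδ, Finset.sum_pi_single']
      simp only [Finset.mem_univ, if_true]
      omega
    · intro i hi
      have hij : i ≠ j := fun h => hj (h ▸ hi)
      simp [hν.2 i hi, hδ, Pi.single_eq_of_ne hij]
  refine ⟨fun μ => if μ ∈ (FIdx S k).image (· + δ) then c (μ - δ) else 0, fun y => ?_⟩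
  dsimp only
  rw [← Finset.sum_subset himg (fun μ _ hμ => by rw [if_neg hμ, smul_zero])]
  rw [Finset.sum_image hinj]
  rw [hc y, Finset.smul_sum]
  refine Finset.sum_congr rfl fun ν hν => ?_
  rw [if_pos (Finset.mem_image_of_mem _ hν), hsub ν, smul_smul, ← hmono y ν]

end AuxPoly

/-- Cauchy–Schwarz for a nonnegative symmetric bilinear form. -/
lemma bilin_sq_le {E : Type*} [NormedAddCommGroup E] [NormedSpace ℝ E]
    (b : E →L[ℝ] E →L[ℝ] ℝ) (hsymm : ∀ v w, b v w = b w v) (hpos : ∀ v, 0 ≤ b v v)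
    (v w : E) : (b v w) ^ 2 ≤ b v v * b w w := by
  have key : ∀ t : ℝ, 0 ≤ b w w * (t * t) + (2 * b v w) * t + b v v := by
    intro t
    have expand : b (v + t • w) (v + t • w)
        = b v v + t * b v w + t * b w v + t * (t * b w w) := by
      simp [map_add, map_smul, smul_eq_mul]
      ring
    have h2 : b w w * (t * t) + (2 * b v w) * t + b v v = b (v + t • w) (v + t • w) := by
      rw [expand, hsymm w v]; ring
    rw [h2]
    exact hpos _
  have hd := discrim_le_zero key
  rw [discrim] at hd
  nlinarith [hd]

/-- The recursively defined polynomial approximation sequence. -/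
def solSeq {W : Type*} [AddCommGroup W] {d : ℕ} (u₀ : W) (M : (Fin d → ℝ) → W → W) :
    ℕ → (Fin d → ℝ) → W
  | 0, _ => u₀
  | n + 1, y => u₀ - M y (solSeq u₀ M n y)
set_option maxHeartbeats 2000000 in
/-- Lemma 3.3: polynomial approximation of the stiff limit solution
map `y_{S^c} ↦ u_S(y_{S^c})` on a rectangle in the variables `y_j`, `j ∉ S`, by
polynomials with coefficients in `V_S`, in both the `‖·‖_{y_{S^c}}` and `H^1_0` norms. -/
theorem statement7
    {V : Type*} [NormedAddCommGroup V] [InnerProductSpace ℝ V] [CompleteSpace V]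
    {d : ℕ}
    (B : Fin d → V →L[ℝ] V →L[ℝ] ℝ)
    (hsymm : ∀ (j : Fin d) (v w : V), B j v w = B j w v)
    (hnonneg : ∀ (j : Fin d) (v : V), 0 ≤ B j v v)
    (hsum : ∀ v w : V, ∑ j, B j v w = ⟪v, w⟫_ℝ)
    (f : V →L[ℝ] ℝ)
    (S : Finset (Fin d))
    (a : Fin d → ℝ) (ha : ∀ j ∉ S, 1 ≤ a j) (k : ℕ) :
    ∃ c : (Fin d → ℕ) → V,
      (∀ ν, c ν ∈ VS B ↑S) ∧
      ∀ y : Fin d → ℝ, (∀ j ∉ S, a j ≤ y j ∧ y j ≤ 2 * a j) →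
        ∀ u : V, u ∈ VS B ↑S →
          (∀ v ∈ VS B ↑S, ∑ j ∈ Sᶜ, y j * B j u v = f v) →
          Real.sqrt (∑ j ∈ Sᶜ, y j *
              B j (u - ∑ ν ∈ (mIdx d k).filter (fun ν => ∀ j ∈ S, ν j = 0), mono y ν • c ν)
                  (u - ∑ ν ∈ (mIdx d k).filter (fun ν => ∀ j ∈ S, ν j = 0), mono y ν • c ν))
            ≤ ‖f‖ / Real.sqrt 3 * (3 : ℝ) ^ (-(k : ℤ)) ∧
          ‖u - ∑ ν ∈ (mIdx d k).filter (fun ν => ∀ j ∈ S, ν j = 0), mono y ν • c ν‖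
            ≤ ‖f‖ / Real.sqrt 6 * (3 : ℝ) ^ (-(k : ℤ)) := by
  classical
  set K : Submodule ℝ V := VS B ↑S with hK
  -- `K` is closed, hence complete
  have hKc : IsClosed (K : Set V) := by
    have hset : (K : Set V) = ⋂ j ∈ (S : Set (Fin d)), {v : V | B j v = 0} := by
      ext v
      simp only [Set.mem_iInter, Set.mem_setOf_eq]
      exact Iff.rfl
    rw [hset]
    exact isClosed_biInter fun j _ => isClosed_eq (B j).continuous continuous_const
  haveI : CompleteSpace ↥K := hKc.completeSpace_coe
  -- the reference parameter
  obtain ⟨yb, hyb⟩ : ∃ yb : Fin d → ℝ, yb = fun j => (3 / 2 : ℝ) * max (a j) 1 := ⟨_, rfl⟩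
  have hyb_ge : ∀ j, (3 / 2 : ℝ) ≤ yb j := by
    intro j
    have : (1 : ℝ) ≤ max (a j) 1 := le_max_right _ _
    rw [hyb]; nlinarith
  have hyb_pos : ∀ j, (0 : ℝ) < yb j := fun j => lt_of_lt_of_le (by norm_num) (hyb_ge j)
  -- the reference energy form on `K`
  obtain ⟨Qb, hQb⟩ : ∃ Qb : ↥K →L[ℝ] ↥K →L[ℝ] ℝ,
      ∀ u v : ↥K, Qb u v = ∑ j ∈ Sᶜ, yb j * B j ↑u ↑v := by
    refine ⟨∑ j ∈ Sᶜ, yb j • (((B j).comp K.subtypeL).flip.comp K.subtypeL).flip,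
      fun u v => ?_⟩
    rw [ContinuousLinearMap.sum_apply, ContinuousLinearMap.sum_apply]
    refine Finset.sum_congr rfl fun j _ => ?_
    rw [ContinuousLinearMap.smul_apply, ContinuousLinearMap.smul_apply, smul_eq_mul]
    rfl
  have hsumSc : ∀ (u : ↥K) (v : V), ∑ j ∈ Sᶜ, (B j) (↑u) v = ⟪(u : V), v⟫_ℝ := by
    intro u v
    have h1 := Finset.sum_add_sum_compl S (fun j => B j (↑u : V) v)
    have h2 : ∑ j ∈ S, B j (↑u : V) v = 0 :=
      Finset.sum_eq_zero fun j hj => by rw [u.2 j hj]; simp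
    rw [hsum (↑u) v] at h1
    linarith
  have hQlower : ∀ v : ↥K, (3 / 2 : ℝ) * ‖v‖ ^ 2 ≤ Qb v v := by
    intro v
    have hcv : ∑ j ∈ Sᶜ, B j (↑v : V) ↑v = ‖v‖ ^ 2 := by
      rw [hsumSc v ↑v, real_inner_self_eq_norm_sq, Submodule.coe_norm]
    calc (3 / 2 : ℝ) * ‖v‖ ^ 2 = ∑ j ∈ Sᶜ, (3 / 2) * B j (↑v : V) ↑v := by
          rw [← Finset.mul_sum, hcv]
      _ ≤ ∑ j ∈ Sᶜ, yb j * B j (↑v : V) ↑v :=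
          Finset.sum_le_sum fun j _ =>
            mul_le_mul_of_nonneg_right (hyb_ge j) (hnonneg j _)
      _ = Qb v v := (hQb v v).symm
  have hQnonneg : ∀ v : ↥K, 0 ≤ Qb v v := fun v => le_trans (by positivity) (hQlower v)
  -- uniqueness from coercivity
  have huniq : ∀ p q : ↥K, (∀ w : ↥K, Qb p w = Qb q w) → p = q := by
    intro p q h
    have h2 : Qb (p - q) (p - q) = 0 := by
      have hsub : Qb (p - q) = Qb p - Qb q := map_sub Qb p q
      rw [hsub, ContinuousLinearMap.sub_apply, h (p - q), sub_self]
    have h3 := hQlower (p - q)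
    have h5 : ‖p - q‖ ^ 2 = 0 := le_antisymm (by linarith) (sq_nonneg _)
    have h4 : ‖p - q‖ = 0 := by
      have := pow_eq_zero_iff (n := 2) (by norm_num) |>.1 h5
      exact this
    exact sub_eq_zero.1 (norm_eq_zero.1 h4)
  -- Lax–Milgram
  have hQcoer : IsCoercive Qb := by
    refine ⟨3 / 2, by norm_num, fun v => ?_⟩
    calc (3 / 2 : ℝ) * ‖v‖ * ‖v‖ = 3 / 2 * ‖v‖ ^ 2 := by ring
      _ ≤ Qb v v := hQlower v
  obtain ⟨u₀, hu₀⟩ : ∃ u₀ : ↥K, ∀ w : ↥K, Qb u₀ w = f ↑w := by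
    refine ⟨hQcoer.continuousLinearEquivOfBilin.symm
      ((InnerProductSpace.toDual ℝ ↥K).symm (f.comp K.subtypeL)), fun w => ?_⟩
    rw [← hQcoer.continuousLinearEquivOfBilin_apply, ContinuousLinearEquiv.apply_symm_apply,
      InnerProductSpace.toDual_symm_apply]
    rfl
  obtain ⟨Mj, hMj⟩ : ∃ Mj : Fin d → ↥K → ↥K,
      ∀ j (v w : ↥K), Qb (Mj j v) w = B j ↑v ↑w := by
    refine ⟨fun j v => hQcoer.continuousLinearEquivOfBilin.symm
      ((InnerProductSpace.toDual ℝ ↥K).symm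
        (((((B j).comp K.subtypeL).flip.comp K.subtypeL).flip) v)), fun j v w => ?_⟩
    rw [← hQcoer.continuousLinearEquivOfBilin_apply, ContinuousLinearEquiv.apply_symm_apply,
      InnerProductSpace.toDual_symm_apply]
    rfl
  have hMj_add : ∀ j (v w : ↥K), Mj j (v + w) = Mj j v + Mj j w := by
    intro j v w
    refine huniq _ _ fun z => ?_
    rw [map_add, ContinuousLinearMap.add_apply, hMj, hMj, hMj, Submodule.coe_add, map_add,
      ContinuousLinearMap.add_apply]
  have hMj_smul : ∀ j (r : ℝ) (v : ↥K), Mj j (r • v) = r • Mj j v := by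
    intro j r v
    refine huniq _ _ fun z => ?_
    rw [map_smul, ContinuousLinearMap.smul_apply, hMj, hMj, Submodule.coe_smul, map_smul,
      ContinuousLinearMap.smul_apply]
  -- the parametric contraction operator
  obtain ⟨My, hMydef⟩ : ∃ My : (Fin d → ℝ) → ↥K → ↥K,
      ∀ (y : Fin d → ℝ) (v : ↥K), My y v = ∑ j ∈ Sᶜ, (y j - yb j) • Mj j v :=
    ⟨fun y v => ∑ j ∈ Sᶜ, (y j - yb j) • Mj j v, fun _ _ => rfl⟩
  have hMy : ∀ (y : Fin d → ℝ) (v w : ↥K),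
      Qb (My y v) w = ∑ j ∈ Sᶜ, (y j - yb j) * B j ↑v ↑w := by
    intro y v w
    rw [hMydef]
    rw [map_sum, ContinuousLinearMap.sum_apply]
    refine Finset.sum_congr rfl fun j _ => ?_
    rw [map_smul, ContinuousLinearMap.smul_apply, hMj, smul_eq_mul]
  have hMy_sub : ∀ (y : Fin d → ℝ) (v w : ↥K), My y (v - w) = My y v - My y w := by
    intro y v w
    refine huniq _ _ fun z => ?_
    have h1 : Qb (My y v - My y w) = Qb (My y v) - Qb (My y w) := map_sub Qb _ _
    rw [h1, ContinuousLinearMap.sub_apply, hMy, hMy, hMy, ← Finset.sum_sub_distrib]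
    refine Finset.sum_congr rfl fun j _ => ?_
    have h2 : ((v - w : ↥K) : V) = ↑v - ↑w := rfl
    have h3 : B j ((v : V) - ↑w) = B j ↑v - B j ↑w := map_sub (B j) _ _
    rw [h2, h3, ContinuousLinearMap.sub_apply]
    ring
  -- the approximating sequence is polynomial of the right degree
  have hUpoly : ∀ n, PolyIn S n (solSeq u₀ My n) := by
    intro n
    induction n with
    | zero =>
        have h0 : solSeq u₀ My 0 = fun _ => u₀ := by funext y; rfl
        rw [h0]
        exact polyIn_const S 0 u₀
    | succ n ih =>
        have hstep : solSeq u₀ My (n + 1) =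
            fun y => (fun _ : Fin d → ℝ => u₀) y - (fun y => My y (solSeq u₀ My n y)) y := by
          funext y; rfl
        rw [hstep]
        refine polyIn_sub (polyIn_const S (n + 1) u₀) ?_
        have hM : (fun y => My y (solSeq u₀ My n y)) =
            fun y => ∑ j ∈ Sᶜ, ((y j - yb j) • Mj j (solSeq u₀ My n y)) := by
          funext y; exact hMydef y _
        rw [hM]
        refine polyIn_finset_sum Sᶜ fun j hj => ?_
        have hsplit : (fun y => (y j - yb j) • Mj j (solSeq u₀ My n y)) =
            fun y => (y j • (fun y => Mj j (solSeq u₀ My n y)) y) -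
              (yb j • (fun y => Mj j (solSeq u₀ My n y)) y) := by
          funext y
          rw [sub_smul]
        rw [hsplit]
        have hmapped : PolyIn S n (fun y => Mj j (solSeq u₀ My n y)) :=
          polyIn_map (Mj j) (hMj_add j) (hMj_smul j) ih
        exact polyIn_sub (polyIn_factor (Finset.mem_compl.1 hj) hmapped)
          (polyIn_mono (Nat.le_succ n) (polyIn_smul (yb j) hmapped))
  obtain ⟨c, hc⟩ := hUpoly k
  refine ⟨fun ν => ↑(c ν), fun ν => (c ν).2, ?_⟩
  intro y hy u hu hueq
  dsimp only
  obtain ⟨u', hcu'⟩ : ∃ u' : ↥K, ((u' : V)) = u := ⟨⟨u, hu⟩, rfl⟩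
  -- rectangle facts
  have hyab : ∀ j ∈ Sᶜ, |y j - yb j| ≤ 1 / 3 * yb j := by
    intro j hj
    have hjS := Finset.mem_compl.1 hj
    obtain ⟨h1, h2⟩ := hy j hjS
    have haj := ha j hjS
    have hmax : yb j = 3 / 2 * a j := by
      rw [hyb]
      dsimp only
      rw [max_eq_left (le_trans (by norm_num) haj)]
    rw [hmax, abs_le]
    constructor <;> nlinarith
  -- bound on the perturbation form
  have hD : ∀ v w : ↥K, |∑ j ∈ Sᶜ, (y j - yb j) * B j (↑v : V) ↑w| ≤
      1 / 3 * (Real.sqrt (Qb v v) * Real.sqrt (Qb w w)) := by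
    intro v w
    have hterm : ∀ j ∈ Sᶜ, |(y j - yb j) * B j (↑v : V) ↑w| ≤
        1 / 3 * (Real.sqrt (yb j * B j (↑v : V) ↑v) * Real.sqrt (yb j * B j (↑w : V) ↑w)) := by
      intro j hj
      rw [abs_mul]
      have hcs := bilin_sq_le (B j) (hsymm j) (hnonneg j) (↑v) (↑w)
      have hB : |B j (↑v : V) ↑w| ≤ Real.sqrt (B j (↑v : V) ↑v) * Real.sqrt (B j (↑w : V) ↑w) := by
        calc |B j (↑v : V) ↑w| = Real.sqrt ((B j (↑v : V) ↑w) ^ 2) := (Real.sqrt_sq_eq_abs _).symm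
          _ ≤ Real.sqrt (B j (↑v : V) ↑v * B j (↑w : V) ↑w) := Real.sqrt_le_sqrt hcs
          _ = _ := Real.sqrt_mul (hnonneg j ↑v) _
      have hyb0 : (0 : ℝ) ≤ yb j := (hyb_pos j).le
      have hstep := mul_le_mul (hyab j hj) hB (abs_nonneg _) (by positivity)
      refine le_trans hstep (le_of_eq ?_)
      rw [Real.sqrt_mul hyb0 (B j (↑v : V) ↑v), Real.sqrt_mul hyb0 (B j (↑w : V) ↑w)]
      have hss : Real.sqrt (yb j) * Real.sqrt (yb j) = yb j := Real.mul_self_sqrt hyb0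
      rw [show (Real.sqrt (yb j) * Real.sqrt (B j (↑v : V) ↑v)) *
            (Real.sqrt (yb j) * Real.sqrt (B j (↑w : V) ↑w)) =
          (Real.sqrt (yb j) * Real.sqrt (yb j)) *
            (Real.sqrt (B j (↑v : V) ↑v) * Real.sqrt (B j (↑w : V) ↑w)) from by ring, hss]
      ring
    calc |∑ j ∈ Sᶜ, (y j - yb j) * B j (↑v : V) ↑w|
        ≤ ∑ j ∈ Sᶜ, |(y j - yb j) * B j (↑v : V) ↑w| := Finset.abs_sum_le_sum_abs _ _
      _ ≤ ∑ j ∈ Sᶜ, 1 / 3 * (Real.sqrt (yb j * B j (↑v : V) ↑v) *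
            Real.sqrt (yb j * B j (↑w : V) ↑w)) := Finset.sum_le_sum hterm
      _ = 1 / 3 * ∑ j ∈ Sᶜ, Real.sqrt (yb j * B j (↑v : V) ↑v) *
            Real.sqrt (yb j * B j (↑w : V) ↑w) := by rw [Finset.mul_sum]
      _ ≤ 1 / 3 * (Real.sqrt (∑ j ∈ Sᶜ, yb j * B j (↑v : V) ↑v) *
            Real.sqrt (∑ j ∈ Sᶜ, yb j * B j (↑w : V) ↑w)) := by
          have hCS := Real.sum_sqrt_mul_sqrt_le (Sᶜ)
            (f := fun j => yb j * B j (↑v : V) ↑v) (g := fun j => yb j * B j (↑w : V) ↑w)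
            (fun i => mul_nonneg (hyb_pos i).le (hnonneg i _))
            (fun i => mul_nonneg (hyb_pos i).le (hnonneg i _))
          linarith
      _ = 1 / 3 * (Real.sqrt (Qb v v) * Real.sqrt (Qb w w)) := by rw [hQb, hQb]
  -- contraction property
  have hcontr : ∀ v : ↥K, Real.sqrt (Qb (My y v) (My y v)) ≤ 1 / 3 * Real.sqrt (Qb v v) := by
    intro v
    have hs2 : Real.sqrt (Qb (My y v) (My y v)) ^ 2 = Qb (My y v) (My y v) :=
      Real.sq_sqrt (hQnonneg _)
    have h1 : Qb (My y v) (My y v) ≤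
        1 / 3 * (Real.sqrt (Qb v v) * Real.sqrt (Qb (My y v) (My y v))) := by
      have h2 := le_trans (le_abs_self _) (hD v (My y v))
      rwa [← hMy y v (My y v)] at h2
    rcases eq_or_lt_of_le (Real.sqrt_nonneg (Qb (My y v) (My y v))) with h | h
    · rw [← h]; positivity
    · nlinarith [Real.sqrt_nonneg (Qb v v)]
  -- the solution identity
  have hsol : u' + My y u' = u₀ := by
    refine huniq _ _ fun w => ?_
    have h1 : Qb (u' + My y u') = Qb u' + Qb (My y u') := map_add Qb _ _
    rw [h1, ContinuousLinearMap.add_apply, hQb, hMy, hu₀, ← Finset.sum_add_distrib,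
      ← hueq ↑w w.2]
    refine Finset.sum_congr rfl fun j _ => ?_
    rw [hcu']
    ring
  -- error recurrence
  have hQneg : ∀ w : ↥K, Qb (-w) (-w) = Qb w w := by
    intro w
    have h1 : Qb (-w) = -(Qb w) := map_neg Qb w
    rw [h1, ContinuousLinearMap.neg_apply, map_neg]
    ring
  have hrec : ∀ n, u' - solSeq u₀ My (n + 1) y = -(My y (u' - solSeq u₀ My n y)) := by
    intro n
    have hstep : solSeq u₀ My (n + 1) y = u₀ - My y (solSeq u₀ My n y) := rfl
    rw [hstep, ← hsol, hMy_sub]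
    abel
  have h0' : u' - solSeq u₀ My 0 y = -(My y u') := by
    have hstep : solSeq u₀ My 0 y = u₀ := rfl
    rw [hstep, ← hsol]
    abel
  have herr : ∀ n, Real.sqrt (Qb (u' - solSeq u₀ My n y) (u' - solSeq u₀ My n y)) ≤
      (1 / 3 : ℝ) ^ (n + 1) * Real.sqrt (Qb u' u') := by
    intro n
    induction n with
    | zero =>
        rw [h0', hQneg]
        simpa using hcontr u'
    | succ n ih =>
        rw [hrec n, hQneg]
        refine le_trans (hcontr _) ?_
        calc 1 / 3 * Real.sqrt (Qb (u' - solSeq u₀ My n y) (u' - solSeq u₀ My n y))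
            ≤ 1 / 3 * ((1 / 3 : ℝ) ^ (n + 1) * Real.sqrt (Qb u' u')) := by linarith
          _ = (1 / 3 : ℝ) ^ (n + 1 + 1) * Real.sqrt (Qb u' u') := by ring
  -- a priori bound on the solution
  have hQu : Qb u' u' ≤ 3 / 2 * ‖f‖ ^ 2 := by
    have hDuu : |∑ j ∈ Sᶜ, (y j - yb j) * B j (↑u' : V) ↑u'| ≤ 1 / 3 * Qb u' u' := by
      have h := hD u' u'
      rwa [Real.mul_self_sqrt (hQnonneg u')] at h
    have hfu : ∑ j ∈ Sᶜ, y j * B j u u = f u := hueq u hu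
    have hsplit : (∑ j ∈ Sᶜ, y j * B j u u) =
        Qb u' u' + ∑ j ∈ Sᶜ, (y j - yb j) * B j (↑u' : V) ↑u' := by
      rw [hQb, ← Finset.sum_add_distrib]
      refine Finset.sum_congr rfl fun j _ => ?_
      rw [hcu']
      ring
    have habs := abs_le.1 hDuu
    have hfb : f u ≤ ‖f‖ * ‖u‖ := by
      calc f u ≤ |f u| := le_abs_self _
        _ = ‖f u‖ := (Real.norm_eq_abs _).symm
        _ ≤ ‖f‖ * ‖u‖ := f.le_opNorm u
    have hnu : ‖u‖ ^ 2 ≤ 2 / 3 * Qb u' u' := by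
      have h := hQlower u'
      have hcn : ‖u'‖ = ‖u‖ := by rw [← hcu']; rfl
      rw [hcn] at h
      linarith
    have hQfu : Qb u' u' ≤ f u + 1 / 3 * Qb u' u' := by linarith [habs.1]
    have h23 : 2 / 3 * Qb u' u' ≤ ‖f‖ * ‖u‖ := by linarith
    have hsq := mul_self_le_mul_self (mul_nonneg (by norm_num) (hQnonneg u')) h23
    nlinarith [hnu, norm_nonneg u, norm_nonneg f, sq_nonneg ‖f‖, hQnonneg u',
      mul_le_mul_of_nonneg_left hnu (sq_nonneg ‖f‖)]
  -- the error vector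
  obtain ⟨g, hgdef⟩ : ∃ g : ↥K, g = u' - solSeq u₀ My k y := ⟨_, rfl⟩
  have hgs : (∑ ν ∈ (mIdx d k).filter (fun ν => ∀ j ∈ S, ν j = 0), mono y ν • ((c ν : V)))
      = ((solSeq u₀ My k y : ↥K) : V) := by
    have h1 : ((solSeq u₀ My k y : ↥K) : V) = ∑ ν ∈ FIdx S k, mono y ν • ((c ν : V)) := by
      rw [hc y]
      simp only [AddSubmonoidClass.coe_finset_sum, SetLike.val_smul]
    rw [h1]
    rfl
  have hgV : u - (∑ ν ∈ (mIdx d k).filter (fun ν => ∀ j ∈ S, ν j = 0),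
      mono y ν • ((c ν : V))) = (↑g : V) := by
    rw [hgs, hgdef, ← hcu']
    rfl
  rw [hgV]
  -- energy bound on the error
  have hQg : Qb g g ≤ (1 / 9 : ℝ) ^ (k + 1) * Qb u' u' := by
    have h := herr k
    rw [← hgdef] at h
    have h2 := mul_self_le_mul_self (Real.sqrt_nonneg _) h
    rw [Real.mul_self_sqrt (hQnonneg _)] at h2
    calc Qb g g ≤ ((1 / 3 : ℝ) ^ (k + 1) * Real.sqrt (Qb u' u')) *
          ((1 / 3 : ℝ) ^ (k + 1) * Real.sqrt (Qb u' u')) := h2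
      _ = (1 / 9 : ℝ) ^ (k + 1) * (Real.sqrt (Qb u' u') * Real.sqrt (Qb u' u')) := by
          rw [show ((1 : ℝ) / 9) = (1 / 3) * (1 / 3) by norm_num, mul_pow]
          ring
      _ = (1 / 9 : ℝ) ^ (k + 1) * Qb u' u' := by rw [Real.mul_self_sqrt (hQnonneg u')]
  have hQgf : Qb g g ≤ (1 / 9 : ℝ) ^ (k + 1) * (3 / 2 * ‖f‖ ^ 2) :=
    le_trans hQg (mul_le_mul_of_nonneg_left hQu (by positivity))
  have hp9 : (0 : ℝ) ≤ (1 / 9 : ℝ) ^ k := by positivity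
  have h9succ : ((1 / 9 : ℝ)) ^ (k + 1) = 1 / 9 * (1 / 9 : ℝ) ^ k := by
    rw [pow_succ]
    ring
  have h3k : ((3 : ℝ)) ^ (-(k : ℤ)) = (1 / 3 : ℝ) ^ k := by
    rw [zpow_neg, zpow_natCast, one_div, inv_pow]
  have hpow2 : ((1 / 3 : ℝ) ^ k) ^ 2 = (1 / 9 : ℝ) ^ k := by
    rw [← pow_mul, show ((1 : ℝ) / 9) = (1 / 3) ^ 2 by norm_num, ← pow_mul, mul_comm]
  constructor
  · -- energy norm estimate
    have hDgg : ∑ j ∈ Sᶜ, (y j - yb j) * B j (↑g : V) ↑g ≤ 1 / 3 * Qb g g := by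
      have h := hD g g
      rw [Real.mul_self_sqrt (hQnonneg g)] at h
      exact (abs_le.1 h).2
    have hsum_g : ∑ j ∈ Sᶜ, y j * B j (↑g : V) ↑g =
        Qb g g + ∑ j ∈ Sᶜ, (y j - yb j) * B j (↑g : V) ↑g := by
      rw [hQb, ← Finset.sum_add_distrib]
      exact Finset.sum_congr rfl fun j _ => by ring
    have hrhs0 : (0 : ℝ) ≤ ‖f‖ / Real.sqrt 3 * (3 : ℝ) ^ (-(k : ℤ)) := by positivity
    refine le_trans (Real.sqrt_le_sqrt ?_) (le_of_eq (Real.sqrt_sq hrhs0))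
    have hRHS1sq : (‖f‖ / Real.sqrt 3 * (3 : ℝ) ^ (-(k : ℤ))) ^ 2
        = ‖f‖ ^ 2 / 3 * (1 / 9 : ℝ) ^ k := by
      rw [h3k, mul_pow, div_pow, Real.sq_sqrt (by norm_num : (0 : ℝ) ≤ 3), hpow2]
    rw [hRHS1sq, hsum_g]
    nlinarith [hQgf, hp9, sq_nonneg ‖f‖, h9succ, hDgg, hQnonneg g]
  · -- H^1_0 estimate
    have hng : ‖g‖ ^ 2 ≤ (1 / 9 : ℝ) ^ (k + 1) * ‖f‖ ^ 2 := by
      have h1 := hQlower g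
      nlinarith [hQgf]
    have hrhs0 : (0 : ℝ) ≤ ‖f‖ / Real.sqrt 6 * (3 : ℝ) ^ (-(k : ℤ)) := by positivity
    have hRHS2sq : (‖f‖ / Real.sqrt 6 * (3 : ℝ) ^ (-(k : ℤ))) ^ 2
        = ‖f‖ ^ 2 / 6 * (1 / 9 : ℝ) ^ k := by
      rw [h3k, mul_pow, div_pow, Real.sq_sqrt (by norm_num : (0 : ℝ) ≤ 6), hpow2]
    have hcg : ‖(↑g : V)‖ = ‖g‖ := rfl
    calc ‖(↑g : V)‖ = Real.sqrt (‖g‖ ^ 2) := by rw [Real.sqrt_sq (norm_nonneg g), hcg]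
      _ ≤ Real.sqrt ((‖f‖ / Real.sqrt 6 * (3 : ℝ) ^ (-(k : ℤ))) ^ 2) := by
          refine Real.sqrt_le_sqrt ?_
          rw [hRHS2sq]
          nlinarith [hng, hp9, sq_nonneg ‖f‖, h9succ]
      _ = _ := Real.sqrt_sq hrhs0

end
end
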